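/- arXiv:2107.09292 — 8 statements merged into one kernel-verified Lean document; each statement's English description precedes it below -/
import Mathlib

section
/- Let L : [0,∞) → ℝ^{N×N} be piecewise constant with respect to a switching sequence 0 = t_0 < t_1 < t_2 < ⋯, t_k → ∞, dwell times t_{k+1} − t_k ≥ α > 0, taking values in a finite set {L_1, …, L_M} of symmetric positive semidefinite matrices. If x : [0,∞) → ℝ^N solves ẋ(t) = −L(t)x(t) and lim_{t→∞} x(t) = x* exists, then lim_{t→∞} L(t)x* = 0. -/
/-!
Along the switching times, `x (t k + α) = exp (-α • L_{σ k}) x (t k)`, and both sides tend to `x*`.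
Hence every mode `i` that is active infinitely often fixes `x*`: `exp (-α • L_i) x* = x*`. For a
symmetric matrix this forces `L_i x* = 0`, because `A = g(A) (1 - exp (c • A))` with
`g(λ) = λ / (1 - exp (c λ))` on the spectrum. Since there are finitely many modes, from some
switching time on only such modes are active, so `L(s) x* = 0` for all large `s`.
-/

open Matrix Filter

open scoped Matrix.Norms.L2Operator in
theorem Matrix.IsHermitian.mulVec_eq_zero_of_exp_smul_mulVec_eq_self
    {n : Type*} [Fintype n] [DecidableEq n] {A : Matrix n n ℝ} (hA : A.IsHermitian)
    {c : ℝ} (hc : c ≠ 0) {v : n → ℝ} (hv : NormedSpace.exp (c • A) *ᵥ v = v) :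
    A *ᵥ v = 0 := by
  have hfin : (spectrum ℝ A).Finite := hA.spectrum_real_eq_range_eigenvalues ▸ Set.finite_range _
  have hexp : NormedSpace.exp (c • A) = cfc (fun x => Real.exp (c * x)) A := by
    rw [← CFC.real_exp_eq_normedSpace_exp,
      ← cfc_comp_smul c Real.exp A Real.continuous_exp.continuousOn hA.isSelfAdjoint]
    rfl
  have hcancel (x : ℝ) : x / (1 - Real.exp (c * x)) * (1 - Real.exp (c * x)) = x := by
    rcases eq_or_ne x 0 with rfl | hx
    · simp
    · refine div_mul_cancel₀ x (sub_ne_zero.mpr fun h => ?_)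
      rw [eq_comm, Real.exp_eq_one_iff, mul_eq_zero] at h
      exact h.elim hc hx
  have hfactor :
      A = cfc (fun x => x / (1 - Real.exp (c * x))) A * (1 - NormedSpace.exp (c • A)) := by
    rw [hexp, ← cfc_one ℝ A, ← cfc_sub _ _ A (hfin.continuousOn _) (hfin.continuousOn _),
      ← cfc_mul _ _ A (hfin.continuousOn _) (hfin.continuousOn _)]
    conv_lhs => rw [← cfc_id' ℝ A]
    exact cfc_congr fun x _ => (hcancel x).symm
  rw [hfactor, ← mulVec_mulVec, sub_mulVec, hv, one_mulVec, sub_self, mulVec_zero]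

theorem Filter.eventually_frequently_eq_of_finite {β ι : Type*} [Finite ι] {l : Filter β}
    (σ : β → ι) : ∀ᶠ k in l, ∃ᶠ m in l, σ m = σ k := by
  have h (i : ι) : ∀ᶠ k in l, (∃ᶠ m in l, σ m = i) ∨ σ k ≠ i := by
    by_cases hi : ∃ᶠ m in l, σ m = i
    · exact .of_forall fun _ => .inl hi
    · exact (not_frequently.mp hi).mono fun _ => .inr
  filter_upwards [eventually_all.mpr h] with k hk
  exact (hk (σ k)).resolve_right (not_not_intro rfl)

theorem exists_ge_mem_Ico_of_tendsto_atTop {α : Type*} [LinearOrder α] [NoMaxOrder α]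
    {t : ℕ → α} (ht : Tendsto t atTop atTop) {K : ℕ} {s : α} (hs : t K ≤ s) :
    ∃ k ≥ K, s ∈ Set.Ico (t k) (t (k + 1)) := by
  classical
  have hex : ∃ n, K < n ∧ s < t n :=
    ((eventually_gt_atTop K).and (ht.eventually_gt_atTop s)).exists
  obtain ⟨hKn, hsn⟩ := Nat.find_spec hex
  obtain ⟨m, hm⟩ : ∃ m, Nat.find hex = m + 1 := Nat.exists_eq_add_one.mpr (by omega)
  refine ⟨m, by omega, ?_, hm ▸ hsn⟩
  rcases (show K ≤ m by omega).eq_or_lt with rfl | hKm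
  · exact hs
  · exact not_lt.mp fun h => Nat.find_min hex (by omega) ⟨hKm, h⟩

theorem cluster_consensus_limit_Laplacian_general
    (N M : ℕ) (α : ℝ) (hα : 0 < α)
    (t : ℕ → ℝ)
    (htlim : Tendsto t atTop atTop)
    (hdwell : ∀ k : ℕ, α ≤ t (k + 1) - t k)
    (Ls : Fin M → Matrix (Fin N) (Fin N) ℝ)
    (hLs : ∀ i, (Ls i).PosSemidef)
    (σ : ℕ → Fin M)
    (L : ℝ → Matrix (Fin N) (Fin N) ℝ)
    (hL : ∀ k : ℕ, ∀ s ∈ Set.Ico (t k) (t (k + 1)), L s = Ls (σ k))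
    (x : ℝ → (Fin N → ℝ))
    (hx : ∀ k : ℕ, ∀ s ∈ Set.Icc (t k) (t (k + 1)),
      x s = NormedSpace.exp (-(s - t k) • Ls (σ k)) *ᵥ x (t k))
    (xstar : Fin N → ℝ)
    (hconv : Tendsto x atTop (nhds xstar)) :
    Tendsto (fun s => L s *ᵥ xstar) atTop (nhds 0) := by
  have hstep (k : ℕ) : x (t k + α) = NormedSpace.exp (-α • Ls (σ k)) *ᵥ x (t k) := by
    have := hx k (t k + α) ⟨by linarith, by linarith [hdwell k]⟩
    rwa [add_sub_cancel_left] at this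
  have hker (i : Fin M) (hi : ∃ᶠ k in atTop, σ k = i) : Ls i *ᵥ xstar = 0 := by
    set E := NormedSpace.exp (-α • Ls i)
    have hE : Tendsto (fun k => E *ᵥ x (t k)) atTop (nhds (E *ᵥ xstar)) :=
      ((continuous_const.matrix_mulVec continuous_id).tendsto xstar).comp (hconv.comp htlim)
    have hshift : Tendsto (fun k => x (t k + α)) atTop (nhds xstar) :=
      hconv.comp (tendsto_atTop_add_const_right _ α htlim)
    refine (hLs i).isHermitian.mulVec_eq_zero_of_exp_smul_mulVec_eq_self (neg_ne_zero.2 hα.ne')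
      (tendsto_nhds_unique_of_frequently_eq hE hshift (hi.mono fun k hk => ?_))
    rw [hstep, hk]
  obtain ⟨K, hK⟩ := eventually_atTop.mp
    ((eventually_frequently_eq_of_finite σ).mono fun k hk => hker (σ k) hk)
  refine tendsto_const_nhds.congr'
    (EventuallyEq.symm (eventually_atTop.mpr ⟨t K, fun s hs => ?_⟩))
  obtain ⟨k, hk, hsk⟩ := exists_ge_mem_Ico_of_tendsto_atTop htlim hs
  show L s *ᵥ xstar = 0
  rw [hL k s hsk, hK k hk]

/-- For a switched linear system `ẋ = -L(t) x` whose piecewise-constant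
generator takes values in a finite set of symmetric positive semidefinite matrices
`Ls 0, …, Ls (M-1)` (with dwell times at least `α > 0` and switching times tending to `∞`),
if the solution `x` converges to `x*`, then `L(t) x* → 0` as `t → ∞`. -/
theorem cluster_consensus_limit_Laplacian
    (N M : ℕ) (α : ℝ) (hα : 0 < α)
    (t : ℕ → ℝ) (ht0 : t 0 = 0) (htmono : StrictMono t)
    (htlim : Tendsto t atTop atTop)
    (hdwell : ∀ k : ℕ, α ≤ t (k + 1) - t k)
    (Ls : Fin M → Matrix (Fin N) (Fin N) ℝ)
    (hLs : ∀ i, (Ls i).PosSemidef)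
    (σ : ℕ → Fin M)
    (L : ℝ → Matrix (Fin N) (Fin N) ℝ)
    (hL : ∀ k : ℕ, ∀ s ∈ Set.Ico (t k) (t (k + 1)), L s = Ls (σ k))
    (x : ℝ → (Fin N → ℝ))
    (hxcont : Continuous x)
    (hx : ∀ k : ℕ, ∀ s ∈ Set.Icc (t k) (t (k + 1)),
      x s = NormedSpace.exp (-(s - t k) • Ls (σ k)) *ᵥ x (t k))
    (xstar : Fin N → ℝ)
    (hconv : Tendsto x atTop (nhds xstar)) :
    Tendsto (fun s => L s *ᵥ xstar) atTop (nhds 0) :=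
  cluster_consensus_limit_Laplacian_general N M α hα t htlim hdwell Ls hLs σ L hL x hx xstar hconv
end

section
/- Let L : [0,∞) → ℝ^{N×N} be piecewise constant with respect to a switching sequence 0 = t_0 < t_1 < ⋯, t_k → ∞, dwell times ≥ α > 0, taking values in a finite set {L_1, …, L_M} of symmetric positive semidefinite matrices, each of which occurs on infinitely many dwell intervals. Let Φ(t, t_0) be the state transition matrix of ẋ = −L(t)x. If Φ* := lim_{t→∞} Φ(t, t_0) exists, then Φ* is idempotent: (Φ*)^i = Φ* for every positive integer i. -/
/-!
Each `exp (-τ • Lᵢ)` is a contraction, and in an eigenbasis of `Lᵢ` one sees that a dwell of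
length `τ ≥ α` loses at least as much squared norm as time `α` does, a loss that vanishes only on
`ker Lᵢ`. Along the convergent trajectory `Φ(tₖ) x` the squared norms converge, so the loss over
the infinitely many `Lᵢ`-dwells tends to zero and `Lᵢ Φ* x = 0`. Then every `exp (-τ • Lᵢ)` fixes
`Φ*`, so `Φ(tₖ) Φ* = Φ*` for all `k`, and letting `k → ∞` gives `Φ* Φ* = Φ*`.
-/

open Matrix Filter

theorem NormedSpace.exp_mul_of_mul_eq_zero {𝔸 : Type*} [NormedRing 𝔸] [NormedAlgebra ℝ 𝔸]
    [CompleteSpace 𝔸] {a b : 𝔸} (h : a * b = 0) : exp a * b = b := by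
  have hpow : ∀ k : ℕ, a ^ (k + 1) * b = 0 := fun k => by rw [pow_succ, mul_assoc, h, mul_zero]
  rw [exp_eq_tsum ℝ, ← (expSeries_summable' (𝕂 := ℝ) a).tsum_mul_right, tsum_eq_single 0]
  · simp
  · rintro (_ | k) hk
    · exact absurd rfl hk
    · rw [smul_mul_assoc, hpow, smul_zero]

namespace Matrix

variable {n : Type*} [Fintype n] [DecidableEq n] {L : Matrix n n ℝ}

theorem exp_mul_of_mul_eq_zero {A B : Matrix n n ℝ} (h : A * B = 0) :
    NormedSpace.exp A * B = B :=
  open scoped Norms.Operator in NormedSpace.exp_mul_of_mul_eq_zero h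

theorem IsHermitian.eq_eigenvectorUnitary_mul_diagonal (hL : L.IsHermitian) :
    L = (hL.eigenvectorUnitary : Matrix n n ℝ) * diagonal hL.eigenvalues *
      star (hL.eigenvectorUnitary : Matrix n n ℝ) := by
  simpa using hL.spectral_theorem

theorem IsHermitian.exp_smul_eq (hL : L.IsHermitian) (c : ℝ) :
    NormedSpace.exp (c • L) = (hL.eigenvectorUnitary : Matrix n n ℝ) *
      diagonal (fun m => Real.exp (c * hL.eigenvalues m)) *
      star (hL.eigenvectorUnitary : Matrix n n ℝ) := by
  set U := hL.eigenvectorUnitary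
  have hU : (U : Matrix n n ℝ) * star (U : Matrix n n ℝ) = 1 := Unitary.mul_star_self_of_mem U.2
  have hsmul : c • L = U * diagonal (fun m => c * hL.eigenvalues m) * (U : Matrix n n ℝ)⁻¹ := by
    conv_lhs => rw [hL.eq_eigenvectorUnitary_mul_diagonal]
    rw [inv_eq_right_inv hU, show diagonal (fun m => c * hL.eigenvalues m) =
      c • diagonal hL.eigenvalues from diagonal_smul c hL.eigenvalues, mul_smul_comm, smul_mul_assoc]
  rw [hsmul, exp_conj _ _ (IsUnit.of_mul_eq_one _ hU), exp_diagonal, inv_eq_right_inv hU]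
  simp only [Pi.exp_def, ← Real.exp_eq_exp_ℝ]

theorem dotProduct_self_mulVec_unitary {U : Matrix n n ℝ} (hU : U ∈ unitaryGroup n ℝ)
    (v : n → ℝ) : (U *ᵥ v) ⬝ᵥ (U *ᵥ v) = v ⬝ᵥ v := by
  have hUt : Uᵀ * U = 1 := by
    simpa [star_eq_conjTranspose] using mem_unitaryGroup_iff'.mp hU
  rw [dotProduct_mulVec, vecMul_mulVec, hUt, vecMul_one]

theorem dotProduct_self_conj_diagonal_mulVec {U : Matrix n n ℝ} (hU : U ∈ unitaryGroup n ℝ)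
    (d v : n → ℝ) :
    ((U * diagonal d * star U) *ᵥ v) ⬝ᵥ ((U * diagonal d * star U) *ᵥ v) =
      ∑ m, (d m * (star U *ᵥ v) m) ^ 2 := by
  rw [← mulVec_mulVec, ← mulVec_mulVec, dotProduct_self_mulVec_unitary hU]
  simp only [dotProduct, mulVec_diagonal, sq]

namespace IsHermitian

variable (hL : L.IsHermitian)
include hL

theorem dotProduct_self_eq_sum (v : n → ℝ) :
    v ⬝ᵥ v = ∑ m, ((star (hL.eigenvectorUnitary : Matrix n n ℝ) *ᵥ v) m) ^ 2 := by
  simpa using dotProduct_self_conj_diagonal_mulVec hL.eigenvectorUnitary.2 1 v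

theorem dotProduct_self_mulVec_eq_sum (v : n → ℝ) :
    (L *ᵥ v) ⬝ᵥ (L *ᵥ v) = ∑ m,
      (hL.eigenvalues m * (star (hL.eigenvectorUnitary : Matrix n n ℝ) *ᵥ v) m) ^ 2 := by
  conv_lhs => rw [hL.eq_eigenvectorUnitary_mul_diagonal]
  exact dotProduct_self_conj_diagonal_mulVec hL.eigenvectorUnitary.2 _ v

theorem dotProduct_self_exp_smul_mulVec_eq_sum (c : ℝ) (v : n → ℝ) :
    (NormedSpace.exp (c • L) *ᵥ v) ⬝ᵥ (NormedSpace.exp (c • L) *ᵥ v) = ∑ m,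
      (Real.exp (c * hL.eigenvalues m) *
        (star (hL.eigenvectorUnitary : Matrix n n ℝ) *ᵥ v) m) ^ 2 := by
  rw [hL.exp_smul_eq]
  exact dotProduct_self_conj_diagonal_mulVec hL.eigenvectorUnitary.2 _ v

end IsHermitian

namespace PosSemidef

variable (hL : L.PosSemidef)
include hL

theorem antitone_dotProduct_self_exp_neg_smul_mulVec (v : n → ℝ) :
    Antitone fun τ : ℝ =>
      (NormedSpace.exp (-τ • L) *ᵥ v) ⬝ᵥ (NormedSpace.exp (-τ • L) *ᵥ v) := by
  intro τ₁ τ₂ hτ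
  simp only [hL.1.dotProduct_self_exp_smul_mulVec_eq_sum, mul_pow]
  gcongr with m
  exact hL.eigenvalues_nonneg m

theorem mulVec_eq_zero_of_dotProduct_self_le {τ : ℝ} (hτ : 0 < τ) {v : n → ℝ}
    (h : v ⬝ᵥ v ≤ (NormedSpace.exp (-τ • L) *ᵥ v) ⬝ᵥ (NormedSpace.exp (-τ • L) *ᵥ v)) :
    L *ᵥ v = 0 := by
  set w := star (hL.1.eigenvectorUnitary : Matrix n n ℝ) *ᵥ v
  have hterm_le : ∀ m, (Real.exp (-τ * hL.1.eigenvalues m) * w m) ^ 2 ≤ w m ^ 2 := by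
    intro m
    rw [mul_pow]
    refine mul_le_of_le_one_left (sq_nonneg _) (pow_le_one₀ (Real.exp_pos _).le ?_)
    exact Real.exp_le_one_iff.2 (by nlinarith [hL.eigenvalues_nonneg m])
  have hterm_eq : ∀ m, (Real.exp (-τ * hL.1.eigenvalues m) * w m) ^ 2 = w m ^ 2 := by
    have := (Finset.sum_eq_sum_iff_of_le fun m _ => hterm_le m).1 <| le_antisymm
      (Finset.sum_le_sum fun m _ => hterm_le m)
      (by rwa [hL.1.dotProduct_self_exp_smul_mulVec_eq_sum, hL.1.dotProduct_self_eq_sum] at h)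
    exact fun m => this m (Finset.mem_univ m)
  rw [← dotProduct_self_eq_zero, hL.1.dotProduct_self_mulVec_eq_sum]
  refine Finset.sum_eq_zero fun m _ => ?_
  rcases (hL.eigenvalues_nonneg m).eq_or_lt with hzero | hpos
  · rw [← hzero, zero_mul, sq, zero_mul]
  · have hlt : Real.exp (-τ * hL.1.eigenvalues m) < 1 :=
      Real.exp_lt_one_iff.2 (by nlinarith)
    have hgap : 0 < 1 - Real.exp (-τ * hL.1.eigenvalues m) ^ 2 := by
      nlinarith [Real.exp_pos (-τ * hL.1.eigenvalues m)]
    have hw : (1 - Real.exp (-τ * hL.1.eigenvalues m) ^ 2) * w m ^ 2 = 0 := by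
      linear_combination -(hterm_eq m)
    rw [mul_pow, (mul_eq_zero.1 hw).resolve_left hgap.ne', mul_zero]

theorem mulVec_eq_zero_of_tendsto {α : ℝ} (hα : 0 < α) {x : ℕ → n → ℝ} {y : n → ℝ}
    {τ : ℕ → ℝ} (hx : Tendsto x atTop (nhds y))
    (hdwell : ∃ᶠ k in atTop, α ≤ τ k ∧ x (k + 1) = NormedSpace.exp (-τ k • L) *ᵥ x k) :
    L *ᵥ y = 0 := by
  have hsq : Continuous fun z : n → ℝ => z ⬝ᵥ z := continuous_id.dotProduct continuous_id
  have hdamp : Continuous fun z : n → ℝ => NormedSpace.exp (-α • L) *ᵥ z :=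
    continuous_const.matrix_mulVec continuous_id
  refine hL.mulVec_eq_zero_of_dotProduct_self_le hα (le_of_tendsto_of_tendsto_of_frequently
    ((hsq.tendsto y).comp (hx.comp (tendsto_add_atTop_nat 1)))
    (((hsq.comp hdamp).tendsto y).comp hx) (hdwell.mono fun k ⟨hτk, hk⟩ => ?_))
  simp only [Function.comp_apply, hk]
  exact hL.antitone_dotProduct_self_exp_neg_smul_mulVec (x k) hτk

end PosSemidef

end Matrix

theorem transitionMatrix_limit_idempotent_general
    (N M : ℕ) (α : ℝ) (hα : 0 < α)
    (t : ℕ → ℝ) (ht0 : t 0 = 0)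
    (htlim : Tendsto t atTop atTop)
    (hdwell : ∀ k : ℕ, α ≤ t (k + 1) - t k)
    (Ls : Fin M → Matrix (Fin N) (Fin N) ℝ)
    (hLs : ∀ i, (Ls i).PosSemidef)
    (σ : ℕ → Fin M)
    (hinf : ∀ i : Fin M, ∀ n : ℕ, ∃ k : ℕ, n ≤ k ∧ σ k = i)
    (Φ : ℝ → Matrix (Fin N) (Fin N) ℝ)
    (hΦ0 : Φ 0 = 1)
    (hΦ : ∀ k : ℕ, ∀ s ∈ Set.Icc (t k) (t (k + 1)),
      Φ s = NormedSpace.exp (-(s - t k) • Ls (σ k)) * Φ (t k))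
    (Φstar : Matrix (Fin N) (Fin N) ℝ)
    (hΦstar : Tendsto Φ atTop (nhds Φstar)) :
    ∀ i : ℕ, 0 < i → Φstar ^ i = Φstar := by
  have hstep (k : ℕ) :
      Φ (t (k + 1)) = NormedSpace.exp (-(t (k + 1) - t k) • Ls (σ k)) * Φ (t k) :=
    hΦ k _ ⟨by linarith [hdwell k], le_rfl⟩
  have hlim : Tendsto (fun k => Φ (t k)) atTop (nhds Φstar) := hΦstar.comp htlim
  have hker (i : Fin M) : Ls i * Φstar = 0 := by
    refine ext_iff_mulVec.2 fun x => ?_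
    rw [← mulVec_mulVec, zero_mulVec]
    refine (hLs i).mulVec_eq_zero_of_tendsto hα
      (((continuous_id.matrix_mulVec continuous_const).tendsto _).comp hlim)
      ((frequently_atTop.2 (hinf i)).mono fun k hk => ⟨hdwell k, ?_⟩)
    simp only [Function.comp_apply, id, hstep k, hk, mulVec_mulVec]
  have hfix (k : ℕ) : Φ (t k) * Φstar = Φstar := by
    induction k with
    | zero => rw [ht0, hΦ0, one_mul]
    | succ k ih =>
      rw [hstep, mul_assoc, ih, exp_mul_of_mul_eq_zero (by rw [smul_mul_assoc, hker, smul_zero])]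
  have hidem : IsIdempotentElem Φstar := tendsto_nhds_unique
    (((continuous_id.matrix_mul continuous_const).tendsto _).comp hlim)
    (tendsto_const_nhds.congr fun k => (hfix k).symm)
  exact fun i hi => hidem.pow_eq hi.ne'

/-- For the switched linear system `ẋ = -L(t) x` whose piecewise-constant
generator takes values in a finite set `{Ls 0, …, Ls (M-1)}` of symmetric positive semidefinite
matrices, each occurring on infinitely many dwell intervals, if the state transition matrix
`Φ(t, t₀)` converges to `Φ*` as `t → ∞`, then `Φ*` is idempotent: `(Φ*)^i = Φ*` for every
positive integer `i`. -/
theorem transitionMatrix_limit_idempotent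
    (N M : ℕ) (α : ℝ) (hα : 0 < α)
    (t : ℕ → ℝ) (ht0 : t 0 = 0) (htmono : StrictMono t)
    (htlim : Tendsto t atTop atTop)
    (hdwell : ∀ k : ℕ, α ≤ t (k + 1) - t k)
    (Ls : Fin M → Matrix (Fin N) (Fin N) ℝ)
    (hLs : ∀ i, (Ls i).PosSemidef)
    (σ : ℕ → Fin M)
    (hinf : ∀ i : Fin M, ∀ n : ℕ, ∃ k : ℕ, n ≤ k ∧ σ k = i)
    (Φ : ℝ → Matrix (Fin N) (Fin N) ℝ)
    (hΦ0 : Φ 0 = 1)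
    (hΦ : ∀ k : ℕ, ∀ s ∈ Set.Icc (t k) (t (k + 1)),
      Φ s = NormedSpace.exp (-(s - t k) • Ls (σ k)) * Φ (t k))
    (Φstar : Matrix (Fin N) (Fin N) ℝ)
    (hΦstar : Tendsto Φ atTop (nhds Φstar)) :
    ∀ i : ℕ, 0 < i → Φstar ^ i = Φstar :=
  transitionMatrix_limit_idempotent_general N M α hα t ht0 htlim hdwell Ls hLs σ hinf Φ hΦ0 hΦ Φstar
    hΦstar
end

section
/- Let L : [0,∞) → ℝ^{N×N} be piecewise constant with respect to a switching sequence 0 = t_0 < t_1 < ⋯, t_k → ∞, dwell times ≥ α > 0, taking values in a finite set {L_1, …, L_M} of symmetric positive semidefinite matrices, each occurring on infinitely many dwell intervals. If x solves ẋ(t) = −L(t)x(t) and lim_{t→∞} x(t) = x*, then x* lies in the intersection of the null spaces of L_1, …, L_M: L_i x* = 0 for every i = 1, …, M. -/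
/-!
Along the infinitely many dwell intervals on which the generator is `Lᵢ`, the state after time
`α` is `exp (-α Lᵢ)` applied to the state at the start of the interval. Both states tend to `x*`,
so `x*` is a fixed point of `exp (-α Lᵢ)`. Diagonalising `Lᵢ`, the coordinates of `x*` along
eigenvalues `λ > 0` are multiplied by `exp (-α λ) < 1`, hence vanish, so `Lᵢ x* = 0`.
-/

open Matrix Filter Function

theorem Real.mul_eq_zero_of_exp_neg_mul_mul_eq {a α v : ℝ} (ha : 0 ≤ a) (hα : 0 < α)
    (h : Real.exp (-α * a) * v = v) : a * v = 0 := by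
  rcases ha.eq_or_lt with rfl | ha
  · exact zero_mul v
  · have hlt : Real.exp (-α * a) < 1 := Real.exp_lt_one_iff.2 (by nlinarith)
    have hv : v = 0 := by
      by_contra hv
      exact hlt.ne (mul_left_cancel₀ hv (by linarith : v * Real.exp (-α * a) = v * 1))
    rw [hv, mul_zero]

theorem Function.isFixedPt_of_tendsto_of_apply_add_eq {E ι : Type*} [TopologicalSpace E]
    [T2Space E] {l : Filter ι} [l.NeBot] {x : ℝ → E} {x₀ : E} (hx : Tendsto x atTop (nhds x₀))
    {f : E → E} (hf : Continuous f) {s : ι → ℝ} (hs : Tendsto s l atTop) {α : ℝ}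
    (h : ∀ n, x (s n + α) = f (x (s n))) : IsFixedPt f x₀ :=
  tendsto_nhds_unique ((hf.tendsto x₀).comp (hx.comp hs))
    ((hx.comp (tendsto_atTop_add_const_right _ α hs)).congr h)

namespace Matrix

variable {n : Type*} [Fintype n] [DecidableEq n] {A : Matrix n n ℝ}

theorem IsHermitian.eq_unitary_mul_diagonal_mul_star (hA : A.IsHermitian) :
    A = (hA.eigenvectorUnitary : Matrix n n ℝ) * diagonal hA.eigenvalues *
      star (hA.eigenvectorUnitary : Matrix n n ℝ) := by
  simpa using hA.spectral_theorem

theorem IsHermitian.exp_smul (hA : A.IsHermitian) (s : ℝ) :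
    NormedSpace.exp (s • A) = (hA.eigenvectorUnitary : Matrix n n ℝ) *
      diagonal (fun j => Real.exp (s * hA.eigenvalues j)) *
      star (hA.eigenvectorUnitary : Matrix n n ℝ) := by
  have hinv : (hA.eigenvectorUnitary : Matrix n n ℝ)⁻¹ =
      star (hA.eigenvectorUnitary : Matrix n n ℝ) :=
    inv_eq_left_inv (Unitary.coe_star_mul_self _)
  conv_lhs => rw [hA.eq_unitary_mul_diagonal_mul_star, ← smul_mul_assoc, ← mul_smul_comm,
    ← diagonal_smul, ← hinv]
  rw [exp_conj _ _ Unitary.isUnit_coe, hinv, exp_diagonal, Pi.exp_def, Real.exp_eq_exp_ℝ]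
  rfl

theorem PosSemidef.mulVec_eq_zero_of_exp_mulVec_eq_self (hA : A.PosSemidef) {α : ℝ} (hα : 0 < α)
    {w : n → ℝ} (hw : NormedSpace.exp (-α • A) *ᵥ w = w) : A *ᵥ w = 0 := by
  have hd := hA.eigenvalues_nonneg
  have hU := Unitary.coe_star_mul_self hA.1.eigenvectorUnitary
  rw [hA.1.exp_smul] at hw
  rw [hA.1.eq_unitary_mul_diagonal_mul_star]
  generalize (hA.1.eigenvectorUnitary : Matrix n n ℝ) = U at hw hU ⊢
  generalize hA.1.eigenvalues = d at hd hw ⊢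
  have hfix : ∀ j, Real.exp (-α * d j) * (star U *ᵥ w) j = (star U *ᵥ w) j := fun j => by
    conv_rhs => rw [← hw]
    rw [mulVec_mulVec, ← mul_assoc, ← mul_assoc, hU, one_mul, ← mulVec_mulVec, mulVec_diagonal]
  have hker : diagonal d *ᵥ (star U *ᵥ w) = 0 := funext fun j => by
    rw [mulVec_diagonal]
    exact Real.mul_eq_zero_of_exp_neg_mul_mul_eq (hd j) hα (hfix j)
  rw [← mulVec_mulVec, ← mulVec_mulVec, hker, mulVec_zero]

end Matrix

theorem limit_in_common_nullspace_general
    (N M : ℕ) (α : ℝ) (hα : 0 < α)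
    (t : ℕ → ℝ)
    (htlim : Tendsto t atTop atTop)
    (hdwell : ∀ k : ℕ, α ≤ t (k + 1) - t k)
    (Ls : Fin M → Matrix (Fin N) (Fin N) ℝ)
    (hLs : ∀ i, (Ls i).PosSemidef)
    (σ : ℕ → Fin M)
    (hinf : ∀ i : Fin M, ∀ n : ℕ, ∃ k : ℕ, n ≤ k ∧ σ k = i)
    (x : ℝ → (Fin N → ℝ))
    (hx : ∀ k : ℕ, ∀ s ∈ Set.Icc (t k) (t (k + 1)),
      x s = NormedSpace.exp (-(s - t k) • Ls (σ k)) *ᵥ x (t k))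
    (xstar : Fin N → ℝ)
    (hconv : Tendsto x atTop (nhds xstar)) :
    ∀ i : Fin M, Ls i *ᵥ xstar = 0 := by
  intro i
  choose k hk hσ using hinf i
  have htk : Tendsto (t ∘ k) atTop atTop := htlim.comp (tendsto_atTop_mono hk tendsto_id)
  refine (hLs i).mulVec_eq_zero_of_exp_mulVec_eq_self hα <|
    isFixedPt_of_tendsto_of_apply_add_eq (α := α) hconv (continuous_const.matrix_mulVec continuous_id) htk
      fun n => ?_
  have hmem : t (k n) + α ∈ Set.Icc (t (k n)) (t (k n + 1)) :=
    ⟨by linarith, by linarith [hdwell (k n)]⟩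
  simpa [hσ n] using hx (k n) _ hmem

/-- For the switched linear system `ẋ = -L(t) x` whose piecewise-constant
generator takes values in a finite set `{Ls 0, …, Ls (M-1)}` of symmetric positive semidefinite
matrices, each occurring on infinitely many dwell intervals, if the solution `x` converges to
`x*`, then `x*` lies in the intersection of the null spaces of the `Ls i`:
`Ls i *ᵥ x* = 0` for every `i`. -/
theorem limit_in_common_nullspace
    (N M : ℕ) (α : ℝ) (hα : 0 < α)
    (t : ℕ → ℝ) (ht0 : t 0 = 0) (htmono : StrictMono t)
    (htlim : Tendsto t atTop atTop)
    (hdwell : ∀ k : ℕ, α ≤ t (k + 1) - t k)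
    (Ls : Fin M → Matrix (Fin N) (Fin N) ℝ)
    (hLs : ∀ i, (Ls i).PosSemidef)
    (σ : ℕ → Fin M)
    (hinf : ∀ i : Fin M, ∀ n : ℕ, ∃ k : ℕ, n ≤ k ∧ σ k = i)
    (x : ℝ → (Fin N → ℝ))
    (hx : ∀ k : ℕ, ∀ s ∈ Set.Icc (t k) (t (k + 1)),
      x s = NormedSpace.exp (-(s - t k) • Ls (σ k)) *ᵥ x (t k))
    (xstar : Fin N → ℝ)
    (hconv : Tendsto x atTop (nhds xstar)) :
    ∀ i : Fin M, Ls i *ᵥ xstar = 0 :=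
  limit_in_common_nullspace_general N M α hα t htlim hdwell Ls hLs σ hinf x hx xstar hconv
end

section
/- Let L : [0,∞) → ℝ^{N×N} be piecewise constant with respect to a switching sequence 0 = t_0 < t_1 < ⋯, t_k → ∞, dwell times ≥ α > 0, taking values in a finite set {L_1, …, L_M} of symmetric positive semidefinite matrices, each occurring on infinitely many dwell intervals. Suppose that for every initial vector the solution of ẋ(t) = −L(t)x(t) converges as t → ∞. Let η_1, …, η_r be an orthonormal basis of ∩_{i=1}^M ker(L_i). Then for every initial condition x(t_0) = x_0, the solution satisfies lim_{t→∞} x(t) = Σ_{i=1}^r (η_i^⊤ x_0) η_i; that is, the limit is the orthogonal projection of x_0 onto ∩_{i=1}^M ker(L_i). -/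
/-!
A vector `z` of the common kernel is fixed by every factor `exp (-c Lᵢ)ᵀ = exp (-c Lᵢ)`, so
`z ⬝ᵥ Φ(s) x₀ = z ⬝ᵥ x₀` for all `s`, and the limit `y` has the same coordinates as `x₀` along
the common kernel. On the other hand each `Lᵢ` is active on infinitely many intervals of length
at least `α`, so passing to the limit along them gives `exp (-α Lᵢ) y = y`. Diagonalizing the
symmetric matrix `Lᵢ`, this reads `e^{-αλ} w = w` coordinatewise, which forces `λ w = 0`; hence
`Lᵢ y = 0`. So `y` lies in the common kernel and is its own orthogonal projection, which is that
of `x₀`.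
-/

open Matrix Filter Topology

namespace Matrix.IsHermitian

variable {n : Type*} [Fintype n] [DecidableEq n] {A : Matrix n n ℝ}

theorem exp_smul_eq_mul_diagonal_mul_star (hA : A.IsHermitian) (c : ℝ) :
    NormedSpace.exp (c • A) = (hA.eigenvectorUnitary : Matrix n n ℝ) *
      diagonal (fun i => Real.exp (c * hA.eigenvalues i)) *
        star (hA.eigenvectorUnitary : Matrix n n ℝ) := by
  set U : Matrix n n ℝ := (hA.eigenvectorUnitary : Matrix n n ℝ)
  have hinv : U⁻¹ = star U := inv_eq_left_inv (Unitary.coe_star_mul_self _)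
  have hU : IsUnit U :=
    (isUnit_iff_isUnit_det _).mpr (isUnit_det_of_left_inverse (Unitary.coe_star_mul_self _))
  have hcA : c • A = U * diagonal (c • hA.eigenvalues) * U⁻¹ := by
    conv_lhs => rw [hA.spectral_theorem]
    rw [Unitary.conjStarAlgAut_apply, hinv, diagonal_smul]
    simp [U]
  rw [hcA, exp_conj _ _ hU, exp_diagonal, Pi.exp_def, hinv]
  simp [Real.exp_eq_exp_ℝ]

theorem exp_smul_mulVec_eq_self_iff (hA : A.IsHermitian) {c : ℝ} (hc : c ≠ 0) {y : n → ℝ} :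
    NormedSpace.exp (c • A) *ᵥ y = y ↔ A *ᵥ y = 0 := by
  set U : Matrix n n ℝ := (hA.eigenvectorUnitary : Matrix n n ℝ)
  have hUU : star U * U = 1 := Unitary.star_mul_self_of_mem hA.eigenvectorUnitary.2
  have hUU' : U * star U = 1 := Unitary.mul_star_self_of_mem hA.eigenvectorUnitary.2
  have hU_inj : Function.Injective (U *ᵥ ·) := fun v w h => by
    simpa [mulVec_mulVec, hUU] using congrArg (star U *ᵥ ·) h
  set w := star U *ᵥ y
  have hy : y = U *ᵥ w := by
    simp [w, mulVec_mulVec, hUU']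
  have hAy : A *ᵥ y = U *ᵥ (diagonal hA.eigenvalues *ᵥ w) := by
    conv_lhs => rw [hA.spectral_theorem]
    simp [w, U, mulVec_mulVec, Matrix.mul_assoc]
  have hexpy : NormedSpace.exp (c • A) *ᵥ y =
      U *ᵥ (diagonal (fun i => Real.exp (c * hA.eigenvalues i)) *ᵥ w) := by
    rw [hA.exp_smul_eq_mul_diagonal_mul_star c]
    simp [w, U, mulVec_mulVec, Matrix.mul_assoc]
  have hcoord (i : n) :
      Real.exp (c * hA.eigenvalues i) * w i = w i ↔ hA.eigenvalues i * w i = 0 := by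
    rw [← sub_eq_zero, ← sub_one_mul, mul_eq_zero, sub_eq_zero, Real.exp_eq_one_iff,
      mul_eq_zero, mul_eq_zero]
    simp [hc]
  rw [hAy, hexpy]
  conv_lhs => rw [hy]
  rw [hU_inj.eq_iff, ← mulVec_zero U, hU_inj.eq_iff, funext_iff, funext_iff]
  simp only [mulVec_diagonal, Pi.zero_apply, hcoord]

theorem vecMul_exp_smul_of_mulVec_eq_zero (hA : A.IsHermitian) (c : ℝ) {z : n → ℝ}
    (hz : A *ᵥ z = 0) : z ᵥ* NormedSpace.exp (c • A) = z := by
  rcases eq_or_ne c 0 with rfl | hc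
  · simp
  have hsymm : (NormedSpace.exp (c • A))ᵀ = NormedSpace.exp (c • A) :=
    IsSymm.exp (by rw [IsSymm, transpose_smul, ← conjTranspose_eq_transpose_of_trivial, hA.eq])
  rw [← mulVec_transpose, hsymm, hA.exp_smul_mulVec_eq_self_iff hc]
  exact hz

end Matrix.IsHermitian

theorem exists_mem_Icc_of_tendsto_atTop {α : Type*} [LinearOrder α] [NoMaxOrder α] {t : ℕ → α}
    (htlim : Tendsto t atTop atTop) {s : α} (hs : t 0 ≤ s) :
    ∃ k, s ∈ Set.Icc (t k) (t (k + 1)) := by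
  classical
  have hex : ∃ m, s < t m := (htlim.eventually_gt_atTop s).exists
  obtain ⟨k, hk⟩ : ∃ k, Nat.find hex = k + 1 :=
    Nat.exists_eq_succ_of_ne_zero fun h0 => (Nat.find_spec hex).not_ge (h0 ▸ hs)
  refine ⟨k, not_lt.mp (Nat.find_min hex (by omega)), ?_⟩
  exact hk ▸ (Nat.find_spec hex).le

theorem eq_sum_dotProduct_smul_of_mem_span {R n ι : Type*} [CommRing R] [Fintype n] [Fintype ι]
    [DecidableEq ι] {η : ι → n → R} (hortho : ∀ i j, η i ⬝ᵥ η j = if i = j then 1 else 0)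
    {y : n → R} (hy : y ∈ Submodule.span R (Set.range η)) :
    ∑ i, (η i ⬝ᵥ y) • η i = y := by
  obtain ⟨c, rfl⟩ := (Submodule.mem_span_range_iff_exists_fun R).mp hy
  refine Finset.sum_congr rfl fun j _ => ?_
  simp [dotProduct_sum, dotProduct_smul, hortho]

section SwitchedSystem

variable {n ι : Type*} [Fintype n] [DecidableEq n]

def IsSwitchedTransition (t : ℕ → ℝ) (Ls : ι → Matrix n n ℝ) (σ : ℕ → ι)
    (Φ : ℝ → Matrix n n ℝ) : Prop :=
  ∀ k : ℕ, ∀ s ∈ Set.Icc (t k) (t (k + 1)),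
    Φ s = NormedSpace.exp (-(s - t k) • Ls (σ k)) * Φ (t k)

namespace IsSwitchedTransition

variable {t : ℕ → ℝ} {Ls : ι → Matrix n n ℝ} {σ : ℕ → ι} {Φ : ℝ → Matrix n n ℝ}
  {z : n → ℝ}

theorem vecMul_eq_of_mem_Icc (hΦ : IsSwitchedTransition t Ls σ Φ)
    (hLs : ∀ i, (Ls i).IsHermitian) (hz : ∀ i, Ls i *ᵥ z = 0) {k : ℕ} {s : ℝ}
    (hs : s ∈ Set.Icc (t k) (t (k + 1))) : z ᵥ* Φ s = z ᵥ* Φ (t k) := by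
  rw [hΦ k s hs, ← vecMul_vecMul, (hLs (σ k)).vecMul_exp_smul_of_mulVec_eq_zero _ (hz (σ k))]

theorem vecMul_eq_self (hΦ : IsSwitchedTransition t Ls σ Φ) (hLs : ∀ i, (Ls i).IsHermitian)
    (hz : ∀ i, Ls i *ᵥ z = 0) (hΦ0 : Φ (t 0) = 1) (htmono : Monotone t)
    (htlim : Tendsto t atTop atTop) {s : ℝ} (hs : t 0 ≤ s) : z ᵥ* Φ s = z := by
  have hgrid (k : ℕ) : z ᵥ* Φ (t k) = z := by
    induction k with
    | zero => simp [hΦ0]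
    | succ k ih =>
      rw [hΦ.vecMul_eq_of_mem_Icc hLs hz ⟨htmono k.le_succ, le_rfl⟩, ih]
  obtain ⟨k, hk⟩ := exists_mem_Icc_of_tendsto_atTop htlim hs
  rw [hΦ.vecMul_eq_of_mem_Icc hLs hz hk, hgrid]

theorem dotProduct_eq_of_tendsto (hΦ : IsSwitchedTransition t Ls σ Φ)
    (hLs : ∀ i, (Ls i).IsHermitian) (hz : ∀ i, Ls i *ᵥ z = 0) (hΦ0 : Φ (t 0) = 1)
    (htmono : Monotone t) (htlim : Tendsto t atTop atTop) {x y : n → ℝ}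
    (hy : Tendsto (fun s => Φ s *ᵥ x) atTop (𝓝 y)) : z ⬝ᵥ y = z ⬝ᵥ x := by
  have hconst : ∀ᶠ s in atTop, z ⬝ᵥ x = z ⬝ᵥ (Φ s *ᵥ x) := by
    filter_upwards [eventually_ge_atTop (t 0)] with s hs
    rw [dotProduct_mulVec, hΦ.vecMul_eq_self hLs hz hΦ0 htmono htlim hs]
  refine tendsto_nhds_unique ?_ (tendsto_const_nhds.congr' hconst)
  exact ((continuous_const.dotProduct continuous_id).tendsto y).comp hy

theorem mulVec_eq_zero_of_tendsto (hΦ : IsSwitchedTransition t Ls σ Φ)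
    (hLs : ∀ i, (Ls i).IsHermitian) {α : ℝ} (hα : 0 < α) (hdwell : ∀ k, α ≤ t (k + 1) - t k)
    (htlim : Tendsto t atTop atTop) {i : ι} (hi : ∀ m, ∃ k, m ≤ k ∧ σ k = i) {x y : n → ℝ}
    (hy : Tendsto (fun s => Φ s *ᵥ x) atTop (𝓝 y)) : Ls i *ᵥ y = 0 := by
  choose k hk hσk using hi
  have htk : Tendsto (fun m => t (k m)) atTop atTop :=
    htlim.comp (tendsto_atTop_mono hk tendsto_id)
  set E := NormedSpace.exp (-α • Ls i)
  have hstep (m : ℕ) : Φ (t (k m) + α) *ᵥ x = E *ᵥ (Φ (t (k m)) *ᵥ x) := by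
    have hmem : t (k m) + α ∈ Set.Icc (t (k m)) (t (k m + 1)) :=
      ⟨by linarith, by linarith [hdwell (k m)]⟩
    rw [hΦ _ _ hmem, add_sub_cancel_left, hσk, mulVec_mulVec]
  have hfix : E *ᵥ y = y := by
    refine tendsto_nhds_unique ?_ (hy.comp (tendsto_atTop_add_const_right _ α htk))
    simp_rw [Function.comp_def, hstep]
    exact ((continuous_const.matrix_mulVec continuous_id).tendsto y).comp (hy.comp htk)
  exact ((hLs i).exp_smul_mulVec_eq_self_iff (neg_ne_zero.mpr hα.ne')).mp hfix

end IsSwitchedTransition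

end SwitchedSystem

/-- For the switched linear system `ẋ = -L(t) x` whose piecewise-constant
generator takes values in a finite set `{Ls 0, …, Ls (M-1)}` of symmetric positive semidefinite
matrices, each occurring on infinitely many dwell intervals, suppose every solution converges
(equivalently, `Φ(t, t₀) x₀` converges for every initial vector `x₀`). If `η 0, …, η (r-1)` is
an orthonormal basis of `⋂ᵢ ker (Ls i)`, then for every initial condition `x₀`, the solution
converges to `∑ᵢ (ηᵢᵀ x₀) ηᵢ`, the orthogonal projection of `x₀` onto `⋂ᵢ ker (Ls i)`. -/
theorem limit_is_projection_onto_common_nullspace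
    (N M r : ℕ) (α : ℝ) (hα : 0 < α)
    (t : ℕ → ℝ) (ht0 : t 0 = 0) (htmono : StrictMono t)
    (htlim : Tendsto t atTop atTop)
    (hdwell : ∀ k : ℕ, α ≤ t (k + 1) - t k)
    (Ls : Fin M → Matrix (Fin N) (Fin N) ℝ)
    (hLs : ∀ i, (Ls i).PosSemidef)
    (σ : ℕ → Fin M)
    (hinf : ∀ i : Fin M, ∀ n : ℕ, ∃ k : ℕ, n ≤ k ∧ σ k = i)
    (Φ : ℝ → Matrix (Fin N) (Fin N) ℝ)
    (hΦ0 : Φ 0 = 1)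
    (hΦ : ∀ k : ℕ, ∀ s ∈ Set.Icc (t k) (t (k + 1)),
      Φ s = NormedSpace.exp (-(s - t k) • Ls (σ k)) * Φ (t k))
    (hconv : ∀ x0 : Fin N → ℝ, ∃ y : Fin N → ℝ, Tendsto (fun s => Φ s *ᵥ x0) atTop (nhds y))
    (η : Fin r → (Fin N → ℝ))
    (hortho : ∀ i j : Fin r, η i ⬝ᵥ η j = if i = j then (1 : ℝ) else 0)
    (hspan : Submodule.span ℝ (Set.range η) = ⨅ i : Fin M, LinearMap.ker (Ls i).mulVecLin) :
    ∀ x0 : Fin N → ℝ,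
      Tendsto (fun s => Φ s *ᵥ x0) atTop (nhds (∑ i : Fin r, (η i ⬝ᵥ x0) • η i)) := by
  intro x0
  obtain ⟨y, hy⟩ := hconv x0
  have hswitch : IsSwitchedTransition t Ls σ Φ := hΦ
  have hherm (i : Fin M) : (Ls i).IsHermitian := (hLs i).1
  have mem_span_iff (z : Fin N → ℝ) :
      z ∈ Submodule.span ℝ (Set.range η) ↔ ∀ i, Ls i *ᵥ z = 0 := by
    simp [hspan, Submodule.mem_iInf]
  have hy_mem : y ∈ Submodule.span ℝ (Set.range η) := (mem_span_iff y).mpr fun i =>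
    hswitch.mulVec_eq_zero_of_tendsto hherm hα hdwell htlim (hinf i) hy
  have hcoeff (j : Fin r) : η j ⬝ᵥ y = η j ⬝ᵥ x0 :=
    hswitch.dotProduct_eq_of_tendsto hherm
      ((mem_span_iff _).mp (Submodule.subset_span ⟨j, rfl⟩)) (ht0 ▸ hΦ0) htmono.monotone htlim hy
  simpa only [← hcoeff, eq_sum_dotProduct_smul_of_mem_span hortho hy_mem] using hy
end

section
/- Let L : [0,∞) → ℝ^{N×N} be piecewise constant with respect to a switching sequence 0 = t_0 < t_1 < ⋯, t_k → ∞, dwell times ≥ α > 0, taking values in a finite set {L_1, …, L_M} of symmetric positive semidefinite matrices, each occurring on infinitely many dwell intervals, and suppose Φ* := lim_{t→∞} Φ(t, t_0) exists, where Φ(t, t_0) is the state transition matrix of ẋ = −L(t)x. Then the fixed-point space {v : Φ* v = v} equals ∩_{i=1}^M ker(L_i), and Φ* equals the orthogonal projection onto ∩_{i=1}^M ker(L_i), i.e. Φ* = Σ_{i=1}^r η_i η_i^⊤ for any orthonormal basis η_1, …, η_r of ∩_{i=1}^M ker(L_i). -/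
/-!
Write `K = ⋂ᵢ ker Lᵢ` and `Pₖ = Φ(tₖ)`, so that `Pₖ₊₁ = exp(-dₖ L_{σ k}) Pₖ` with dwell times
`dₖ ≥ α`. Each factor `exp(-dₖ L)` is symmetric and fixes `K`, hence `⟪Pₖ u, z⟫ = ⟪u, z⟫` for
`z ∈ K`, and in the limit `Φ* u - u ⊥ K`. Moreover, along the infinitely many steps `k` with
`σ k = i`, both `y = Pₖ u` and `Pₖ₊₁ u` tend to `z = Φ* u`, and
`⟪y, y - exp(-dₖ Lᵢ) y⟫ ≥ ⟪y, (1 - exp(-α Lᵢ)) y⟫ ≥ 0`; passing to the limit forces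
`⟪z, (1 - exp(-α Lᵢ)) z⟫ = 0`, i.e. `Lᵢ z = 0`. So `Φ*` maps into `K` and `Φ* u - u ⊥ K`: it is
the orthogonal projection onto `K`, which is both of the claims.
-/

open Matrix Filter Topology Unitary

namespace Matrix

variable {n : Type*} [Fintype n]

structure IsOrthogonalProjection (A : Matrix n n ℝ) (K : Submodule ℝ (n → ℝ)) : Prop where
  mulVec_mem : ∀ u, A *ᵥ u ∈ K
  mulVec_dotProduct : ∀ u, ∀ z ∈ K, A *ᵥ u ⬝ᵥ z = u ⬝ᵥ z

namespace IsOrthogonalProjection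

variable {A B : Matrix n n ℝ} {K : Submodule ℝ (n → ℝ)}

lemma mulVec_eq_self_iff (hA : IsOrthogonalProjection A K) (v : n → ℝ) :
    A *ᵥ v = v ↔ v ∈ K := by
  refine ⟨fun h ↦ h ▸ hA.mulVec_mem v, fun hv ↦ ?_⟩
  have hw : A *ᵥ v - v ∈ K := sub_mem (hA.mulVec_mem v) hv
  have : (A *ᵥ v - v) ⬝ᵥ (A *ᵥ v - v) = 0 := by
    rw [sub_dotProduct, hA.mulVec_dotProduct v _ hw, sub_self]
  exact sub_eq_zero.mp (dotProduct_self_eq_zero.mp this)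

lemma unique (hA : IsOrthogonalProjection A K) (hB : IsOrthogonalProjection B K) : A = B := by
  refine mulVec_injective (funext fun u ↦ ?_)
  have hw : A *ᵥ u - B *ᵥ u ∈ K := sub_mem (hA.mulVec_mem u) (hB.mulVec_mem u)
  have : (A *ᵥ u - B *ᵥ u) ⬝ᵥ (A *ᵥ u - B *ᵥ u) = 0 := by
    rw [sub_dotProduct, hA.mulVec_dotProduct u _ hw, hB.mulVec_dotProduct u _ hw, sub_self]
  exact sub_eq_zero.mp (dotProduct_self_eq_zero.mp this)

end IsOrthogonalProjection

lemma isOrthogonalProjection_sum_vecMulVec {ι : Type*} [Fintype ι] [DecidableEq ι]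
    {η : ι → n → ℝ} (hη : ∀ i j, η i ⬝ᵥ η j = if i = j then 1 else 0) :
    IsOrthogonalProjection (∑ i, vecMulVec (η i) (η i)) (Submodule.span ℝ (Set.range η)) := by
  have hmulVec : ∀ u, (∑ i, vecMulVec (η i) (η i)) *ᵥ u = ∑ i, (η i ⬝ᵥ u) • η i := by
    simp [sum_mulVec, vecMulVec_mulVec]
  refine ⟨fun u ↦ ?_, fun u z hz ↦ ?_⟩
  · rw [hmulVec]
    exact Submodule.sum_mem _ fun i _ ↦ Submodule.smul_mem _ _ (Submodule.subset_span ⟨i, rfl⟩)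
  · induction hz using Submodule.span_induction with
    | mem _ hz =>
      obtain ⟨j, rfl⟩ := hz
      simp [hmulVec, sum_dotProduct, hη, dotProduct_comm u]
    | zero => simp
    | add _ _ _ _ hx hy => rw [dotProduct_add, dotProduct_add, hx, hy]
    | smul _ _ _ hx => rw [dotProduct_smul, dotProduct_smul, hx]

variable [DecidableEq n]

lemma conjStarAlgAut_diagonal_mulVec_eq_iff (U : unitary (Matrix n n ℝ)) (a b v : n → ℝ) :
    conjStarAlgAut ℝ _ U (diagonal a) *ᵥ v = conjStarAlgAut ℝ _ U (diagonal b) *ᵥ v ↔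
      ∀ j, a j * (star (U : Matrix n n ℝ) *ᵥ v) j = b j * (star (U : Matrix n n ℝ) *ᵥ v) j := by
  have hinj : Function.Injective ((U : Matrix n n ℝ) *ᵥ ·) := fun x y h ↦ by
    simpa [mulVec_mulVec] using congrArg ((star (U : Matrix n n ℝ)) *ᵥ ·) h
  simp only [conjStarAlgAut_apply, ← mulVec_mulVec, hinj.eq_iff, funext_iff, mulVec_diagonal]

namespace IsHermitian

variable {L : Matrix n n ℝ}

lemma exp_neg_smul_eq (hL : L.IsHermitian) (s : ℝ) :
    NormedSpace.exp (-s • L) = conjStarAlgAut ℝ _ hL.eigenvectorUnitary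
      (diagonal fun j ↦ Real.exp (-s * hL.eigenvalues j)) := by
  set U : Matrix n n ℝ := ↑hL.eigenvectorUnitary
  have hUinv : U⁻¹ = star U := inv_eq_left_inv (star_mul_self_of_mem hL.eigenvectorUnitary.2)
  have : -s • L = U * diagonal (-s • hL.eigenvalues) * U⁻¹ := by
    conv_lhs => rw [hL.spectral_theorem, conjStarAlgAut_apply]
    rw [hUinv, diagonal_smul, Matrix.mul_smul, Matrix.smul_mul]
    simp [U]
  rw [this, exp_conj _ _ isUnit_coe, exp_diagonal, hUinv, conjStarAlgAut_apply]
  congr 3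
  funext j
  simp [Real.exp_eq_exp_ℝ]

lemma exp_neg_smul_mulVec_eq_self_iff (hL : L.IsHermitian) {s : ℝ} (hs : s ≠ 0) (v : n → ℝ) :
    NormedSpace.exp (-s • L) *ᵥ v = v ↔ L *ᵥ v = 0 := by
  set U := hL.eigenvectorUnitary
  calc NormedSpace.exp (-s • L) *ᵥ v = v
      ↔ conjStarAlgAut ℝ _ U (diagonal fun j ↦ Real.exp (-s * hL.eigenvalues j)) *ᵥ v
        = conjStarAlgAut ℝ _ U (diagonal fun _ ↦ 1) *ᵥ v := by
        rw [hL.exp_neg_smul_eq, diagonal_one, map_one, one_mulVec]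
    _ ↔ conjStarAlgAut ℝ _ U (diagonal (RCLike.ofReal ∘ hL.eigenvalues)) *ᵥ v
        = conjStarAlgAut ℝ _ U (diagonal fun _ ↦ 0) *ᵥ v := by
        simp only [conjStarAlgAut_diagonal_mulVec_eq_iff]
        refine forall_congr' fun j ↦ ?_
        by_cases hc : (star (U : Matrix n n ℝ) *ᵥ v) j = 0 <;> simp [hc, hs]
    _ ↔ L *ᵥ v = 0 := by rw [diagonal_zero, map_zero, zero_mulVec, ← hL.spectral_theorem]

lemma transpose_exp_neg_smul (hL : L.IsHermitian) (s : ℝ) :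
    (NormedSpace.exp (-s • L))ᵀ = NormedSpace.exp (-s • L) :=
  ((isHermitian_iff_isSymm.mp hL).smul _).exp

end IsHermitian

namespace PosSemidef

variable {L : Matrix n n ℝ}

lemma exp_neg_smul_sub (hL : L.PosSemidef) {a s : ℝ} (has : a ≤ s) :
    (NormedSpace.exp (-a • L) - NormedSpace.exp (-s • L)).PosSemidef := by
  rw [hL.isHermitian.exp_neg_smul_eq, hL.isHermitian.exp_neg_smul_eq, ← map_sub, diagonal_sub,
    conjStarAlgAut_apply, star_eq_conjTranspose]
  refine (posSemidef_diagonal_iff.mpr fun j ↦ ?_).mul_mul_conjTranspose_same _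
  have := hL.eigenvalues_nonneg j
  simp only [sub_nonneg, Real.exp_le_exp]
  nlinarith

lemma mulVec_eq_zero_of_tendsto_exp_neg_smul_mulVec {ι : Type*} {l : Filter ι} [l.NeBot]
    (hL : L.PosSemidef) {α : ℝ} (hα : 0 < α) {d : ι → ℝ} (hd : ∀ k, α ≤ d k)
    {y : ι → n → ℝ} {z : n → ℝ} (hy : Tendsto y l (𝓝 z))
    (hEy : Tendsto (fun k ↦ NormedSpace.exp (-d k • L) *ᵥ y k) l (𝓝 z)) : L *ᵥ z = 0 := by
  set Q := 1 - NormedSpace.exp (-α • L)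
  have hQ : Q.PosSemidef := by simpa [Q] using hL.exp_neg_smul_sub hα.le
  have hbound : ∀ k, y k ⬝ᵥ (Q *ᵥ y k) ≤ y k ⬝ᵥ (y k - NormedSpace.exp (-d k • L) *ᵥ y k) := by
    intro k
    have := (hL.exp_neg_smul_sub (hd k)).dotProduct_mulVec_nonneg (y k)
    simp only [Q, star_trivial, sub_mulVec, one_mulVec, dotProduct_sub] at this ⊢
    linarith
  have hQz_le : z ⬝ᵥ (Q *ᵥ z) ≤ z ⬝ᵥ (z - z) :=
    le_of_tendsto_of_tendsto'
      (((continuous_id.dotProduct (continuous_const.matrix_mulVec continuous_id)).tendsto z).comp hy)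
      (((continuous_fst.dotProduct (continuous_fst.sub continuous_snd)).tendsto (z, z)).comp
        (hy.prodMk_nhds hEy)) hbound
  have hQz : Q *ᵥ z = 0 := by
    rw [← hQ.dotProduct_mulVec_zero_iff, star_trivial]
    exact le_antisymm (by simpa using hQz_le) (by simpa using hQ.dotProduct_mulVec_nonneg z)
  rw [sub_mulVec, one_mulVec, sub_eq_zero] at hQz
  exact (hL.isHermitian.exp_neg_smul_mulVec_eq_self_iff hα.ne' z).mp hQz.symm

end PosSemidef

section SwitchedSystem

variable {ι : Type*} {L : ι → Matrix n n ℝ} {σ : ℕ → ι} {d : ℕ → ℝ} {P : ℕ → Matrix n n ℝ}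

lemma mulVec_dotProduct_eq_of_forall_mulVec_eq_zero (hL : ∀ i, (L i).IsHermitian)
    (hd : ∀ k, d k ≠ 0) (hP : ∀ k, P (k + 1) = NormedSpace.exp (-d k • L (σ k)) * P k)
    {z : n → ℝ} (hz : ∀ i, L i *ᵥ z = 0) (u : n → ℝ) (k : ℕ) :
    P k *ᵥ u ⬝ᵥ z = P 0 *ᵥ u ⬝ᵥ z := by
  induction k with
  | zero => rfl
  | succ k ih =>
    have hEz := ((hL (σ k)).exp_neg_smul_mulVec_eq_self_iff (hd k) z).mpr (hz (σ k))
    rw [hP, ← mulVec_mulVec, dotProduct_comm, dotProduct_mulVec, ← mulVec_transpose,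
      (hL (σ k)).transpose_exp_neg_smul, hEz, dotProduct_comm, ih]

lemma mulVec_mulVec_eq_zero_of_tendsto {α : ℝ} (hL : ∀ i, (L i).PosSemidef) (hα : 0 < α)
    (hd : ∀ k, α ≤ d k) (hP : ∀ k, P (k + 1) = NormedSpace.exp (-d k • L (σ k)) * P k)
    {Pstar : Matrix n n ℝ} (hlim : Tendsto P atTop (𝓝 Pstar)) {i : ι}
    (hi : ∃ᶠ k in atTop, σ k = i) (u : n → ℝ) : L i *ᵥ (Pstar *ᵥ u) = 0 := by
  obtain ⟨φ, hφ, hσφ⟩ := extraction_of_frequently_atTop hi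
  have hPu : Tendsto (fun k ↦ P k *ᵥ u) atTop (𝓝 (Pstar *ᵥ u)) :=
    ((continuous_id.matrix_mulVec continuous_const).tendsto Pstar).comp hlim
  refine (hL i).mulVec_eq_zero_of_tendsto_exp_neg_smul_mulVec (l := atTop) hα
    (fun m ↦ hd (φ m)) (hPu.comp hφ.tendsto_atTop) ?_
  refine (hPu.comp ((tendsto_add_atTop_nat 1).comp hφ.tendsto_atTop)).congr fun m ↦ ?_
  simp [hP, hσφ, mulVec_mulVec]

theorem isOrthogonalProjection_of_tendsto {α : ℝ} (hL : ∀ i, (L i).PosSemidef) (hα : 0 < α)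
    (hd : ∀ k, α ≤ d k) (hσ : ∀ i, ∃ᶠ k in atTop, σ k = i) (hP0 : P 0 = 1)
    (hP : ∀ k, P (k + 1) = NormedSpace.exp (-d k • L (σ k)) * P k)
    {Pstar : Matrix n n ℝ} (hlim : Tendsto P atTop (𝓝 Pstar)) :
    IsOrthogonalProjection Pstar (⨅ i, LinearMap.ker (L i).mulVecLin) := by
  have hmem : ∀ z, z ∈ ⨅ i, LinearMap.ker (L i).mulVecLin ↔ ∀ i, L i *ᵥ z = 0 := by
    simp [Submodule.mem_iInf]
  refine ⟨fun u ↦ (hmem _).mpr fun i ↦ mulVec_mulVec_eq_zero_of_tendsto hL hα hd hP hlim (hσ i) u,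
    fun u z hz ↦ ?_⟩
  have hconst := mulVec_dotProduct_eq_of_forall_mulVec_eq_zero (fun i ↦ (hL i).isHermitian)
    (fun k ↦ (hα.trans_le (hd k)).ne') hP ((hmem z).mp hz) u
  rw [hP0, one_mulVec] at hconst
  have hlimdot : Tendsto (fun k ↦ P k *ᵥ u ⬝ᵥ z) atTop (𝓝 (Pstar *ᵥ u ⬝ᵥ z)) :=
    (((continuous_id.matrix_mulVec continuous_const).dotProduct continuous_const).tendsto
      Pstar).comp hlim
  exact tendsto_nhds_unique (hlimdot.congr hconst) tendsto_const_nhds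

end SwitchedSystem

end Matrix

theorem transitionMatrix_limit_is_projection_general
    (N M : ℕ) (α : ℝ) (hα : 0 < α)
    (t : ℕ → ℝ) (ht0 : t 0 = 0)
    (htlim : Tendsto t atTop atTop)
    (hdwell : ∀ k : ℕ, α ≤ t (k + 1) - t k)
    (Ls : Fin M → Matrix (Fin N) (Fin N) ℝ)
    (hLs : ∀ i, (Ls i).PosSemidef)
    (σ : ℕ → Fin M)
    (hinf : ∀ i : Fin M, ∀ n : ℕ, ∃ k : ℕ, n ≤ k ∧ σ k = i)
    (Φ : ℝ → Matrix (Fin N) (Fin N) ℝ)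
    (hΦ0 : Φ 0 = 1)
    (hΦ : ∀ k : ℕ, ∀ s ∈ Set.Icc (t k) (t (k + 1)),
      Φ s = NormedSpace.exp (-(s - t k) • Ls (σ k)) * Φ (t k))
    (Φstar : Matrix (Fin N) (Fin N) ℝ)
    (hΦstar : Tendsto Φ atTop (nhds Φstar)) :
    (∀ v : Fin N → ℝ,
        Φstar *ᵥ v = v ↔ v ∈ ⨅ i : Fin M, LinearMap.ker (Ls i).mulVecLin) ∧
    (∀ (r : ℕ) (η : Fin r → (Fin N → ℝ)),
        (∀ i j : Fin r, η i ⬝ᵥ η j = if i = j then (1 : ℝ) else 0) →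
        Submodule.span ℝ (Set.range η) = ⨅ i : Fin M, LinearMap.ker (Ls i).mulVecLin →
        Φstar = ∑ i : Fin r, vecMulVec (η i) (η i)) := by
  have hstep : ∀ k, Φ (t (k + 1)) = NormedSpace.exp (-(t (k + 1) - t k) • Ls (σ k)) * Φ (t k) :=
    fun k ↦ hΦ k _ ⟨by linarith [hdwell k], le_rfl⟩
  have hproj : IsOrthogonalProjection Φstar (⨅ i, LinearMap.ker (Ls i).mulVecLin) :=
    isOrthogonalProjection_of_tendsto (P := fun k ↦ Φ (t k)) hLs hα hdwell
      (fun i ↦ frequently_atTop.mpr (hinf i)) (by rw [ht0, hΦ0]) hstep (hΦstar.comp htlim)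
  refine ⟨hproj.mulVec_eq_self_iff, fun r η hη hspan ↦ hproj.unique ?_⟩
  exact hspan ▸ isOrthogonalProjection_sum_vecMulVec hη

/-- For the switched linear system `ẋ = -L(t) x` whose piecewise-constant
generator takes values in a finite set `{Ls 0, …, Ls (M-1)}` of symmetric positive semidefinite
matrices, each occurring on infinitely many dwell intervals, if `Φ* = lim_{t→∞} Φ(t, t₀)`
exists, then the fixed-point space `{v : Φ* v = v}` equals `⋂ᵢ ker (Ls i)`, and `Φ*` is the
orthogonal projection onto `⋂ᵢ ker (Ls i)`: `Φ* = ∑ᵢ ηᵢ ηᵢᵀ` for any orthonormal basis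
`η 1, …, η r` of `⋂ᵢ ker (Ls i)`. -/
theorem transitionMatrix_limit_is_projection
    (N M : ℕ) (α : ℝ) (hα : 0 < α)
    (t : ℕ → ℝ) (ht0 : t 0 = 0) (htmono : StrictMono t)
    (htlim : Tendsto t atTop atTop)
    (hdwell : ∀ k : ℕ, α ≤ t (k + 1) - t k)
    (Ls : Fin M → Matrix (Fin N) (Fin N) ℝ)
    (hLs : ∀ i, (Ls i).PosSemidef)
    (σ : ℕ → Fin M)
    (hinf : ∀ i : Fin M, ∀ n : ℕ, ∃ k : ℕ, n ≤ k ∧ σ k = i)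
    (Φ : ℝ → Matrix (Fin N) (Fin N) ℝ)
    (hΦ0 : Φ 0 = 1)
    (hΦ : ∀ k : ℕ, ∀ s ∈ Set.Icc (t k) (t (k + 1)),
      Φ s = NormedSpace.exp (-(s - t k) • Ls (σ k)) * Φ (t k))
    (Φstar : Matrix (Fin N) (Fin N) ℝ)
    (hΦstar : Tendsto Φ atTop (nhds Φstar)) :
    (∀ v : Fin N → ℝ,
        Φstar *ᵥ v = v ↔ v ∈ ⨅ i : Fin M, LinearMap.ker (Ls i).mulVecLin) ∧
    (∀ (r : ℕ) (η : Fin r → (Fin N → ℝ)),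
        (∀ i j : Fin r, η i ⬝ᵥ η j = if i = j then (1 : ℝ) else 0) →
        Submodule.span ℝ (Set.range η) = ⨅ i : Fin M, LinearMap.ker (Ls i).mulVecLin →
        Φstar = ∑ i : Fin r, vecMulVec (η i) (η i)) :=
  transitionMatrix_limit_is_projection_general N M α hα t ht0 htlim hdwell Ls hLs σ hinf Φ hΦ0 hΦ
    Φstar hΦstar
end

section
/- Let L_1, …, L_p ∈ ℝ^{N×N} be symmetric positive semidefinite and Δ_1, …, Δ_p > 0, and set Φ = exp(−Δ_p L_p) ⋯ exp(−Δ_2 L_2) exp(−Δ_1 L_1). If η ∈ ℝ^N satisfies ‖Φη‖ = ‖η‖, then L_j η = 0 for every j = 1, …, p; that is, η ∈ ∩_{j=1}^p ker(L_j). -/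
/-!
In an orthonormal eigenbasis of a positive semidefinite `L`, `exp (-Δ • L)` multiplies the `i`-th
coordinate by `e^{-Δ λᵢ} ∈ (0, 1]`. Hence every factor of `Φ` is a contraction that preserves the
norm of a vector only if it fixes it, and for `Δ ≠ 0` a vector fixed by `exp (-Δ • L)` has zero
coordinates wherever `λᵢ ≠ 0`, i.e. lies in `ker L`. Along the product the norm can only drop, so
`‖Φ η‖ = ‖η‖` forces the factors, one after the other, to fix `η`.
-/

open Matrix Filter

/-- The Euclidean norm on `Fin n → ℝ`. -/
noncomputable def eNorm {n : ℕ} (v : Fin n → ℝ) : ℝ := Real.sqrt (∑ i, v i ^ 2)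

lemma eNorm_le_eNorm_iff {n : ℕ} {v w : Fin n → ℝ} :
    eNorm v ≤ eNorm w ↔ ∑ i, v i ^ 2 ≤ ∑ i, w i ^ 2 :=
  Real.sqrt_le_sqrt_iff (by positivity)

lemma eNorm_eq_eNorm_iff {n : ℕ} {v w : Fin n → ℝ} :
    eNorm v = eNorm w ↔ ∑ i, v i ^ 2 = ∑ i, w i ^ 2 :=
  Real.sqrt_inj (by positivity) (by positivity)

lemma eNorm_unitary_mulVec {n : ℕ} (U : unitary (Matrix (Fin n) (Fin n) ℝ)) (v : Fin n → ℝ) :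
    eNorm ((U : Matrix (Fin n) (Fin n) ℝ) *ᵥ v) = eNorm v := by
  have hsq : ∀ w : Fin n → ℝ, ∑ i, w i ^ 2 = w ⬝ᵥ w := fun w => by simp only [dotProduct, sq]
  rw [eNorm_eq_eNorm_iff, hsq, hsq, dotProduct_mulVec, ← vecMul_transpose, vecMul_vecMul,
    ← conjTranspose_eq_transpose_of_trivial, ← star_eq_conjTranspose, Unitary.coe_star_mul_self,
    vecMul_one]

lemma eNorm_mul_le {n : ℕ} {d : Fin n → ℝ} (hd : ∀ i, |d i| ≤ 1) (y : Fin n → ℝ) :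
    eNorm (d * y) ≤ eNorm y := by
  rw [eNorm_le_eNorm_iff]
  refine Finset.sum_le_sum fun i _ => ?_
  rw [Pi.mul_apply, mul_pow]
  exact mul_le_of_le_one_left (sq_nonneg _) (sq_le_one_iff_abs_le_one _ |>.mpr (hd i))

lemma mul_eq_self_of_eNorm_mul_eq {n : ℕ} {d y : Fin n → ℝ} (hd₀ : ∀ i, 0 ≤ d i)
    (hd₁ : ∀ i, d i ≤ 1) (h : eNorm (d * y) = eNorm y) : d * y = y := by
  have hle : ∀ i ∈ Finset.univ, (d * y) i ^ 2 ≤ y i ^ 2 := fun i _ => by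
    rw [Pi.mul_apply, mul_pow]
    exact mul_le_of_le_one_left (sq_nonneg _) (pow_le_one₀ (hd₀ i) (hd₁ i))
  have hsq := (Finset.sum_eq_sum_iff_of_le hle).mp (eNorm_eq_eNorm_iff.mp h)
  funext i
  have := hsq i (Finset.mem_univ i)
  rw [Pi.mul_apply] at this ⊢
  nlinarith [hd₀ i, hd₁ i, sq_nonneg (y i), sq_nonneg (d i * y i - y i)]

namespace Matrix.IsHermitian

variable {ι : Type*} [Fintype ι] [DecidableEq ι] {A : Matrix ι ι ℝ}

noncomputable def eigenCoords (hA : A.IsHermitian) (x : ι → ℝ) : ι → ℝ :=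
  star (hA.eigenvectorUnitary : Matrix ι ι ℝ) *ᵥ x

lemma eigenCoords_injective (hA : A.IsHermitian) : Function.Injective hA.eigenCoords := by
  intro x y h
  simpa [eigenCoords, mulVec_mulVec] using
    congrArg ((hA.eigenvectorUnitary : Matrix ι ι ℝ) *ᵥ ·) h

lemma eigenCoords_cfc_mulVec (hA : A.IsHermitian) (f : ℝ → ℝ) (x : ι → ℝ) :
    hA.eigenCoords (cfc f A *ᵥ x) = (f ∘ hA.eigenvalues) * hA.eigenCoords x := by
  rw [hA.cfc_eq, IsHermitian.cfc, Unitary.conjStarAlgAut_apply, eigenCoords, eigenCoords,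
    mulVec_mulVec, ← mul_assoc, ← mul_assoc, Unitary.coe_star_mul_self, one_mul, ← mulVec_mulVec]
  funext i
  simp [mulVec_diagonal]

lemma eigenCoords_mulVec (hA : A.IsHermitian) (x : ι → ℝ) :
    hA.eigenCoords (A *ᵥ x) = hA.eigenvalues * hA.eigenCoords x := by
  simpa [cfc_id ℝ A hA.isSelfAdjoint] using hA.eigenCoords_cfc_mulVec id x

lemma exp_smul_eq_cfc (hA : A.IsHermitian) (c : ℝ) :
    NormedSpace.exp (c • A) = cfc (fun t => Real.exp (c * t)) A := by
  -- `exp` depends only on the topology; any Banach algebra norm gives access to the CFC exponential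
  let _ := Matrix.instL2OpNormedRing (n := ι) (𝕜 := ℝ)
  let _ := Matrix.instL2OpNormedAlgebra (n := ι) (𝕜 := ℝ)
  rw [← CFC.real_exp_eq_normedSpace_exp ((IsSelfAdjoint.all c).smul hA.isSelfAdjoint),
    ← cfc_comp_smul c Real.exp A]
  rfl

lemma mulVec_eq_zero_of_exp_smul_mulVec_eq_self_s7 (hA : A.IsHermitian) {c : ℝ} (hc : c ≠ 0)
    {x : ι → ℝ} (h : NormedSpace.exp (c • A) *ᵥ x = x) : A *ᵥ x = 0 := by
  have hfix := congrArg hA.eigenCoords h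
  rw [hA.exp_smul_eq_cfc, eigenCoords_cfc_mulVec] at hfix
  apply hA.eigenCoords_injective
  rw [eigenCoords_mulVec, show hA.eigenCoords 0 = 0 from mulVec_zero _]
  funext i
  have hi : Real.exp (c * hA.eigenvalues i) * hA.eigenCoords x i = hA.eigenCoords x i :=
    congrFun hfix i
  rcases eq_or_ne (hA.eigenCoords x i) 0 with hy | hy
  · simp [hy]
  · have : c * hA.eigenvalues i = 0 :=
      Real.exp_eq_one_iff _ |>.mp <| (mul_left_eq_self₀.mp hi).resolve_right hy
    simp [(mul_eq_zero.mp this).resolve_left hc]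

end Matrix.IsHermitian

lemma Matrix.IsHermitian.eNorm_eigenCoords {n : ℕ} {A : Matrix (Fin n) (Fin n) ℝ}
    (hA : A.IsHermitian) (x : Fin n → ℝ) : eNorm (hA.eigenCoords x) = eNorm x :=
  eNorm_unitary_mulVec (star hA.eigenvectorUnitary) x

namespace Matrix.PosSemidef

variable {n : ℕ} {M : Matrix (Fin n) (Fin n) ℝ} {c : ℝ}

lemma exp_mul_eigenvalues_mem_Icc (hM : M.PosSemidef) (hc : c ≤ 0) (i : Fin n) :
    Real.exp (c * hM.1.eigenvalues i) ∈ Set.Icc 0 1 :=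
  ⟨(Real.exp_pos _).le,
    Real.exp_le_one_iff.mpr (mul_nonpos_of_nonpos_of_nonneg hc (hM.eigenvalues_nonneg i))⟩

lemma eNorm_exp_smul_mulVec_le (hM : M.PosSemidef) (hc : c ≤ 0) (x : Fin n → ℝ) :
    eNorm (NormedSpace.exp (c • M) *ᵥ x) ≤ eNorm x := by
  rw [← hM.1.eNorm_eigenCoords, ← hM.1.eNorm_eigenCoords x, hM.1.exp_smul_eq_cfc,
    hM.1.eigenCoords_cfc_mulVec]
  refine eNorm_mul_le (fun i => ?_) _
  obtain ⟨h₀, h₁⟩ := hM.exp_mul_eigenvalues_mem_Icc hc i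
  exact (abs_of_nonneg h₀).trans_le h₁

lemma exp_smul_mulVec_eq_self_of_eNorm_eq (hM : M.PosSemidef) (hc : c ≤ 0) {x : Fin n → ℝ}
    (h : eNorm (NormedSpace.exp (c • M) *ᵥ x) = eNorm x) :
    NormedSpace.exp (c • M) *ᵥ x = x := by
  apply hM.1.eigenCoords_injective
  rw [← hM.1.eNorm_eigenCoords, ← hM.1.eNorm_eigenCoords x, hM.1.exp_smul_eq_cfc,
    hM.1.eigenCoords_cfc_mulVec] at h
  rw [hM.1.exp_smul_eq_cfc, hM.1.eigenCoords_cfc_mulVec]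
  exact mul_eq_self_of_eNorm_mul_eq (fun i => (hM.exp_mul_eigenvalues_mem_Icc hc i).1)
    (fun i => (hM.exp_mul_eigenvalues_mem_Icc hc i).2) h

end Matrix.PosSemidef

namespace List

variable {n : ℕ}

lemma eNorm_reverse_prod_mulVec_le (l : List (Matrix (Fin n) (Fin n) ℝ))
    (hl : ∀ A ∈ l, ∀ x, eNorm (A *ᵥ x) ≤ eNorm x) (x : Fin n → ℝ) :
    eNorm (l.reverse.prod *ᵥ x) ≤ eNorm x := by
  induction l generalizing x with
  | nil => simp
  | cons A l ih =>
    rw [reverse_cons, prod_append, prod_singleton, ← mulVec_mulVec]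
    exact (ih (fun B hB => hl B (mem_cons_of_mem _ hB)) _).trans (hl A mem_cons_self x)

lemma forall_mulVec_eq_self_of_eNorm_reverse_prod_mulVec_eq
    (l : List (Matrix (Fin n) (Fin n) ℝ)) (hl : ∀ A ∈ l, ∀ x, eNorm (A *ᵥ x) ≤ eNorm x)
    (hfix : ∀ A ∈ l, ∀ x, eNorm (A *ᵥ x) = eNorm x → A *ᵥ x = x) {x : Fin n → ℝ}
    (h : eNorm (l.reverse.prod *ᵥ x) = eNorm x) : ∀ A ∈ l, A *ᵥ x = x := by
  induction l with
  | nil => simp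
  | cons A l ih =>
    have hl' : ∀ B ∈ l, ∀ x, eNorm (B *ᵥ x) ≤ eNorm x := fun B hB => hl B (mem_cons_of_mem _ hB)
    rw [reverse_cons, prod_append, prod_singleton, ← mulVec_mulVec] at h
    -- the norm can only drop along the chain, so it is preserved by `A` already
    have hA : A *ᵥ x = x := hfix A mem_cons_self x <| le_antisymm (hl A mem_cons_self x)
      (h ▸ l.eNorm_reverse_prod_mulVec_le hl' _)
    rw [hA] at h
    exact forall_mem_cons.mpr ⟨hA, ih hl' (fun B hB => hfix B (mem_cons_of_mem _ hB)) h⟩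

end List

/-- Let `L 0, …, L (p-1)` be symmetric positive semidefinite, `Δ j > 0`, and
`Φ = exp(-Δ_{p-1} L_{p-1}) ⋯ exp(-Δ_0 L_0)`.  If `‖Φ η‖ = ‖η‖` (Euclidean norm), then
`L j η = 0` for every `j`, i.e. `η ∈ ⋂ⱼ ker Lⱼ`. -/
theorem norm_preserved_implies_common_nullspace
    (N p : ℕ)
    (L : Fin p → Matrix (Fin N) (Fin N) ℝ)
    (hL : ∀ j, (L j).PosSemidef)
    (Δ : Fin p → ℝ) (hΔ : ∀ j, 0 < Δ j)
    (Φ : Matrix (Fin N) (Fin N) ℝ)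
    (hΦ : Φ = ((List.ofFn fun j : Fin p => NormedSpace.exp (-(Δ j) • L j)).reverse).prod)
    (η : Fin N → ℝ)
    (hnorm : eNorm (Φ *ᵥ η) = eNorm η) :
    ∀ j : Fin p, L j *ᵥ η = 0 := by
  have hc : ∀ j, -Δ j ≤ 0 := fun j => neg_nonpos.mpr (hΔ j).le
  have hfixed : ∀ A ∈ List.ofFn fun j => NormedSpace.exp (-(Δ j) • L j), A *ᵥ η = η := by
    refine List.forall_mulVec_eq_self_of_eNorm_reverse_prod_mulVec_eq _ ?_ ?_ (hΦ ▸ hnorm)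
    · exact List.forall_mem_ofFn_iff.mpr fun j => (hL j).eNorm_exp_smul_mulVec_le (hc j)
    · exact List.forall_mem_ofFn_iff.mpr fun j _ =>
        (hL j).exp_smul_mulVec_eq_self_of_eNorm_eq (hc j)
  intro j
  exact (hL j).1.mulVec_eq_zero_of_exp_smul_mulVec_eq_self_s7 (neg_ne_zero.mpr (hΔ j).ne')
    (hfixed _ (List.mem_ofFn.mpr ⟨j, rfl⟩))
end

section
/- Let L_1, …, L_p ∈ ℝ^{N×N} be symmetric positive semidefinite and Δ_1, …, Δ_p > 0, and set Φ = exp(−Δ_p L_p) ⋯ exp(−Δ_1 L_1). Let m = dim(∩_{j=1}^p ker(L_j)), and let 1 ≥ μ_1 ≥ μ_2 ≥ ⋯ ≥ μ_N ≥ 0 be the eigenvalues of the symmetric positive semidefinite matrix Φ^⊤Φ, listed in decreasing order with multiplicity. Then μ_1 = ⋯ = μ_m = 1 and μ_{m+1} < 1. -/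
/-!
Each factor `exp (-Δⱼ Lⱼ)` is diagonalised by an eigenbasis of `Lⱼ`, with diagonal entries in
`(0, 1]`; hence it is a contraction which preserves the norm of `x` only if it fixes `x`, and it
fixes `x` exactly when `Lⱼ x = 0`. A product of such contractions preserves `‖x‖` only if every
factor fixes `x`, so `‖Φ x‖ ≤ ‖x‖` with equality exactly on `⋂ⱼ ker Lⱼ`. For the symmetric matrix
`A = Φᵀ Φ` this says that all eigenvalues are at most `1` and that the eigenspace of `1` is
`⋂ⱼ ker Lⱼ`. Since `A` is diagonalisable, the multiplicity of the eigenvalue `1` in the list `μ`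
is the dimension `m` of that eigenspace, and an antitone list bounded by `1` in which `1` occurs
`m` times starts with exactly `m` ones.
-/

open Matrix Polynomial Module Finset

theorem Antitone.apply_eq_iff_lt_card {α : Type*} [PartialOrder α] [DecidableEq α] {N : ℕ}
    {f : Fin N → α} (hf : Antitone f) {b : α} (hb : ∀ i, f i ≤ b) (i : Fin N) :
    f i = b ↔ (i : ℕ) < #{j | f j = b} := by
  constructor
  · intro hi
    have hsub : Iic i ⊆ ({j | f j = b} : Finset (Fin N)) := fun j hj ↦ by
      simp only [mem_filter, mem_univ, true_and]
      exact le_antisymm (hb j) (hi ▸ hf (mem_Iic.mp hj))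
    simpa using card_le_card hsub
  · intro hlt
    by_contra hne
    have hsub : ({j | f j = b} : Finset (Fin N)) ⊆ Iio i := fun j hj ↦ by
      simp only [mem_filter, mem_univ, true_and] at hj
      refine mem_Iio.mpr (lt_of_not_ge fun hij ↦ hne ?_)
      exact le_antisymm (hb i) (hj ▸ hf hij)
    simpa using (card_le_card hsub).trans_lt' hlt

theorem List.forall_mem_reverse_ofFn_iff {α : Type*} {p : ℕ} {f : Fin p → α} {P : α → Prop} :
    (∀ a ∈ (List.ofFn f).reverse, P a) ↔ ∀ j, P (f j) := by
  simp only [List.mem_reverse, List.forall_mem_ofFn_iff]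

theorem Polynomial.rootMultiplicity_prod_X_sub_C {R ι : Type*} [CommRing R] [IsDomain R]
    [DecidableEq R] [Fintype ι] (f : ι → R) (a : R) :
    (∏ i, (X - C (f i))).rootMultiplicity a = #{i | f i = a} := by
  rw [← count_roots, roots_prod _ _ (by simp [Finset.prod_ne_zero_iff, X_sub_C_ne_zero])]
  simp [Multiset.count_map, Finset.card, eq_comm]

namespace Matrix

theorem isHermitian_transpose_mul_self {m n : Type*} [Fintype m] (Φ : Matrix m n ℝ) :
    (Φᵀ * Φ).IsHermitian := by
  simpa [conjTranspose_eq_transpose_of_trivial] using isHermitian_conjTranspose_mul_self Φ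

variable {n : Type*} [Fintype n]

theorem dotProduct_transpose_mul_self_mulVec (Φ : Matrix n n ℝ) (x : n → ℝ) :
    x ⬝ᵥ (Φᵀ * Φ) *ᵥ x = Φ *ᵥ x ⬝ᵥ Φ *ᵥ x := by
  rw [← mulVec_mulVec, dotProduct_mulVec, vecMul_transpose, dotProduct_comm]

variable [DecidableEq n]

theorem IsHermitian.finrank_eigenspace_toLin' {𝕜 : Type*} [RCLike 𝕜] {A : Matrix n n 𝕜}
    (hA : A.IsHermitian) (μ : 𝕜) :
    finrank 𝕜 (End.eigenspace (toLin' A) μ) = A.charpoly.rootMultiplicity μ := by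
  -- Semisimplicity makes the eigenspace the whole generalised eigenspace.
  have hss : End.IsFinitelySemisimple (toLin' A) := by
    rw [End.isFinitelySemisimple_iff_isSemisimple, ← LinearEquiv.isSemisimple_iff
      (toEuclideanLin A) _ (WithLp.linearEquiv 2 𝕜 (n → 𝕜)) (by ext; rfl),
      ← End.isFinitelySemisimple_iff_isSemisimple]
    exact (isSymmetric_toEuclideanLin_iff.mpr hA).isFinitelySemisimple
  rw [← hss.maxGenEigenspace_eq_eigenspace, LinearMap.finrank_maxGenEigenspace_eq,
    charpoly_toLin']

theorem unitary_mulVec_star_mulVec {U : Matrix n n ℝ} (hU : U ∈ unitaryGroup n ℝ)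
    (v : n → ℝ) : U *ᵥ (star U *ᵥ v) = v := by
  rw [mulVec_mulVec, Unitary.mul_star_self_of_mem hU, one_mulVec]

theorem unitary_mulVec_inj {U : Matrix n n ℝ} (hU : U ∈ unitaryGroup n ℝ) {v w : n → ℝ} :
    U *ᵥ v = U *ᵥ w ↔ v = w := by
  refine ⟨fun h ↦ ?_, congrArg _⟩
  simpa [mulVec_mulVec, Unitary.star_mul_self_of_mem hU] using congrArg (star U *ᵥ ·) h

theorem dotProduct_unitary_mulVec {U : Matrix n n ℝ} (hU : U ∈ unitaryGroup n ℝ)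
    (v : n → ℝ) : U *ᵥ v ⬝ᵥ U *ᵥ v = v ⬝ᵥ v := by
  rw [dotProduct_mulVec, ← mulVec_transpose, mulVec_mulVec,
    ← conjTranspose_eq_transpose_of_trivial, ← star_eq_conjTranspose,
    Unitary.star_mul_self_of_mem hU, one_mulVec]

theorem dotProduct_self_eq_sum_star_mulVec {U : Matrix n n ℝ} (hU : U ∈ unitaryGroup n ℝ)
    (x : n → ℝ) : x ⬝ᵥ x = ∑ i, (star U *ᵥ x) i ^ 2 := by
  conv_lhs => rw [← unitary_mulVec_star_mulVec hU x, dotProduct_unitary_mulVec hU]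
  exact Finset.sum_congr rfl fun i _ ↦ (sq _).symm

theorem conj_diagonal_mulVec (U : Matrix n n ℝ) (d v : n → ℝ) :
    (U * diagonal d * star U) *ᵥ v = U *ᵥ (d * star U *ᵥ v) := by
  rw [← mulVec_mulVec, ← mulVec_mulVec]
  congr 1
  ext i
  simp [mulVec_diagonal]

theorem conj_diagonal_mulVec_dotProduct_self {U : Matrix n n ℝ} (hU : U ∈ unitaryGroup n ℝ)
    (g x : n → ℝ) :
    (U * diagonal g * star U) *ᵥ x ⬝ᵥ (U * diagonal g * star U) *ᵥ x =
      ∑ i, g i ^ 2 * (star U *ᵥ x) i ^ 2 := by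
  rw [conj_diagonal_mulVec, dotProduct_unitary_mulVec hU]
  exact Finset.sum_congr rfl fun i _ ↦ by simp only [Pi.mul_apply]; ring

theorem exp_conj_diagonal {U : Matrix n n ℝ} (hU : U ∈ unitaryGroup n ℝ) (d : n → ℝ) :
    NormedSpace.exp (U * diagonal d * star U) =
      U * diagonal (fun i ↦ Real.exp (d i)) * star U := by
  have hinv : U⁻¹ = star U := inv_eq_left_inv (Unitary.star_mul_self_of_mem hU)
  rw [← hinv, exp_conj _ _ (Unitary.isUnit_coe (U := ⟨U, hU⟩)), exp_diagonal, Pi.exp_def,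
    Real.exp_eq_exp_ℝ]

variable (n) in
def contractions : Submonoid (Matrix n n ℝ) where
  carrier := {S | ∀ x, S *ᵥ x ⬝ᵥ S *ᵥ x ≤ x ⬝ᵥ x}
  one_mem' := by simp
  mul_mem' {S T} hS hT x := by
    rw [← mulVec_mulVec]
    exact (hS _).trans (hT x)

theorem conj_diagonal_mem_contractions {U : Matrix n n ℝ} (hU : U ∈ unitaryGroup n ℝ)
    {g : n → ℝ} (hg₀ : 0 ≤ g) (hg₁ : g ≤ 1) : U * diagonal g * star U ∈ contractions n := by
  intro x
  rw [conj_diagonal_mulVec_dotProduct_self hU, dotProduct_self_eq_sum_star_mulVec hU x]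
  gcongr with i
  exact mul_le_of_le_one_left (sq_nonneg _) (pow_le_one₀ (hg₀ i) (hg₁ i))

theorem conj_diagonal_mulVec_dotProduct_self_eq_iff {U : Matrix n n ℝ}
    (hU : U ∈ unitaryGroup n ℝ) {g : n → ℝ} (hg₀ : 0 ≤ g) (hg₁ : g ≤ 1) (x : n → ℝ) :
    (U * diagonal g * star U) *ᵥ x ⬝ᵥ (U * diagonal g * star U) *ᵥ x = x ⬝ᵥ x ↔
      (U * diagonal g * star U) *ᵥ x = x := by
  refine ⟨fun h ↦ ?_, fun h ↦ by rw [h]⟩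
  rw [conj_diagonal_mulVec_dotProduct_self hU, dotProduct_self_eq_sum_star_mulVec hU x,
    Finset.sum_eq_sum_iff_of_le fun i _ ↦
      mul_le_of_le_one_left (sq_nonneg _) (pow_le_one₀ (hg₀ i) (hg₁ i))] at h
  conv_rhs => rw [← unitary_mulVec_star_mulVec hU x]
  rw [conj_diagonal_mulVec, unitary_mulVec_inj hU]
  funext i
  have hi : (g i - 1) * ((g i + 1) * (star U *ᵥ x) i ^ 2) = 0 := by
    linear_combination h i (Finset.mem_univ i)
  rcases mul_eq_zero.mp hi with hg | hy
  · simp [sub_eq_zero.mp hg]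
  · have : 0 ≤ g i := hg₀ i
    have hy₀ : (star U *ᵥ x) i = 0 := by
      simpa using (mul_eq_zero.mp hy).resolve_left (by positivity)
    simp [hy₀]

theorem IsHermitian.eq_conj_diagonal_eigenvalues {A : Matrix n n ℝ} (hA : A.IsHermitian) :
    A = hA.eigenvectorUnitary * diagonal hA.eigenvalues *
      star (hA.eigenvectorUnitary : Matrix n n ℝ) := by
  simpa [Unitary.conjStarAlgAut_apply] using hA.spectral_theorem

theorem IsHermitian.exp_smul_eq_conj_diagonal {A : Matrix n n ℝ} (hA : A.IsHermitian) (s : ℝ) :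
    NormedSpace.exp (s • A) = hA.eigenvectorUnitary *
      diagonal (fun i ↦ Real.exp (s * hA.eigenvalues i)) *
      star (hA.eigenvectorUnitary : Matrix n n ℝ) := by
  conv_lhs => rw [hA.eq_conj_diagonal_eigenvalues, ← Matrix.smul_mul, ← Matrix.mul_smul,
    ← diagonal_smul]
  exact exp_conj_diagonal hA.eigenvectorUnitary.2 _

theorem IsHermitian.exp_smul_mulVec_eq_self_iff_s8 {A : Matrix n n ℝ} (hA : A.IsHermitian) {s : ℝ}
    (hs : s ≠ 0) (x : n → ℝ) : NormedSpace.exp (s • A) *ᵥ x = x ↔ A *ᵥ x = 0 := by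
  have hU := hA.eigenvectorUnitary.2
  set U : Matrix n n ℝ := (hA.eigenvectorUnitary : Matrix n n ℝ)
  set y := star U *ᵥ x
  have hE : NormedSpace.exp (s • A) *ᵥ x =
      U *ᵥ ((fun i ↦ Real.exp (s * hA.eigenvalues i)) * y) := by
    rw [hA.exp_smul_eq_conj_diagonal, conj_diagonal_mulVec]
  have hAx : A *ᵥ x = U *ᵥ (hA.eigenvalues * y) := by
    conv_lhs => rw [hA.eq_conj_diagonal_eigenvalues]
    exact conj_diagonal_mulVec _ _ _
  conv_lhs => rw [hE, ← unitary_mulVec_star_mulVec hU x]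
  rw [hAx, ← mulVec_zero U, unitary_mulVec_inj hU, unitary_mulVec_inj hU, funext_iff, funext_iff]
  refine forall_congr' fun i ↦ ?_
  simp only [Pi.mul_apply, Pi.zero_apply]
  rw [← sub_eq_zero, ← sub_one_mul, mul_eq_zero, mul_eq_zero, sub_eq_zero, Real.exp_eq_one_iff,
    mul_eq_zero, or_iff_right hs]

theorem PosSemidef.exp_neg_mul_eigenvalues_mem_Icc {L : Matrix n n ℝ} (hL : L.PosSemidef)
    {t : ℝ} (ht : 0 ≤ t) (i : n) :
    Real.exp (-t * hL.isHermitian.eigenvalues i) ∈ Set.Icc 0 1 :=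
  ⟨(Real.exp_pos _).le, Real.exp_le_one_iff.mpr <|
    mul_nonpos_of_nonpos_of_nonneg (neg_nonpos.mpr ht) (hL.eigenvalues_nonneg i)⟩

theorem PosSemidef.exp_neg_smul_mem_contractions {L : Matrix n n ℝ} (hL : L.PosSemidef)
    {t : ℝ} (ht : 0 ≤ t) : NormedSpace.exp (-t • L) ∈ contractions n := by
  rw [hL.isHermitian.exp_smul_eq_conj_diagonal]
  exact conj_diagonal_mem_contractions hL.isHermitian.eigenvectorUnitary.2
    (fun i ↦ (hL.exp_neg_mul_eigenvalues_mem_Icc ht i).1)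
    (fun i ↦ (hL.exp_neg_mul_eigenvalues_mem_Icc ht i).2)

theorem PosSemidef.exp_neg_smul_mulVec_dotProduct_self_eq_iff {L : Matrix n n ℝ}
    (hL : L.PosSemidef) {t : ℝ} (ht : 0 ≤ t) (x : n → ℝ) :
    NormedSpace.exp (-t • L) *ᵥ x ⬝ᵥ NormedSpace.exp (-t • L) *ᵥ x = x ⬝ᵥ x ↔
      NormedSpace.exp (-t • L) *ᵥ x = x := by
  rw [hL.isHermitian.exp_smul_eq_conj_diagonal]
  exact conj_diagonal_mulVec_dotProduct_self_eq_iff hL.isHermitian.eigenvectorUnitary.2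
    (fun i ↦ (hL.exp_neg_mul_eigenvalues_mem_Icc ht i).1)
    (fun i ↦ (hL.exp_neg_mul_eigenvalues_mem_Icc ht i).2) x

theorem list_prod_mulVec_eq_self {R : Type*} [Semiring R] {l : List (Matrix n n R)}
    {x : n → R} (h : ∀ S ∈ l, S *ᵥ x = x) : l.prod *ᵥ x = x := by
  induction l with
  | nil => simp
  | cons S l ih =>
    rw [List.prod_cons, ← mulVec_mulVec, ih fun T hT ↦ h T (List.mem_cons_of_mem S hT),
      h S List.mem_cons_self]

theorem list_prod_mulVec_dotProduct_self_eq_iff {l : List (Matrix n n ℝ)}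
    (hc : ∀ S ∈ l, S ∈ contractions n)
    (hr : ∀ S ∈ l, ∀ y, S *ᵥ y ⬝ᵥ S *ᵥ y = y ⬝ᵥ y → S *ᵥ y = y) {x : n → ℝ} :
    l.prod *ᵥ x ⬝ᵥ l.prod *ᵥ x = x ⬝ᵥ x ↔ ∀ S ∈ l, S *ᵥ x = x := by
  refine ⟨fun hx ↦ ?_, fun h ↦ by rw [list_prod_mulVec_eq_self h]⟩
  induction l with
  | nil => simp
  | cons S l ih =>
    simp only [List.mem_cons, forall_eq_or_imp] at hc hr ⊢
    rw [List.prod_cons, ← mulVec_mulVec] at hx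
    have hl : l.prod *ᵥ x ⬝ᵥ l.prod *ᵥ x = x ⬝ᵥ x :=
      le_antisymm (Submonoid.list_prod_mem _ hc.2 x) (hx ▸ hc.1 _)
    have hfix := ih hc.2 hr.2 hl
    rw [list_prod_mulVec_eq_self hfix] at hx
    exact ⟨hr.1 x hx, hfix⟩

theorem transpose_mul_self_mulVec_eq_self_iff {Φ : Matrix n n ℝ} (hΦ : Φ ∈ contractions n)
    (x : n → ℝ) : (Φᵀ * Φ) *ᵥ x = x ↔ Φ *ᵥ x ⬝ᵥ Φ *ᵥ x = x ⬝ᵥ x := by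
  have hpsd : (1 - Φᵀ * Φ).PosSemidef := by
    refine .of_dotProduct_mulVec_nonneg ?_ fun y ↦ ?_
    · exact isHermitian_one.sub (isHermitian_transpose_mul_self Φ)
    · rw [star_trivial, sub_mulVec, one_mulVec, dotProduct_sub,
        dotProduct_transpose_mul_self_mulVec, sub_nonneg]
      exact hΦ y
  have := hpsd.dotProduct_mulVec_zero_iff x
  rw [star_trivial, sub_mulVec, one_mulVec, dotProduct_sub,
    dotProduct_transpose_mul_self_mulVec, sub_eq_zero, sub_eq_zero] at this
  rw [eq_comm (a := (Φᵀ * Φ) *ᵥ x), eq_comm (a := Φ *ᵥ x ⬝ᵥ Φ *ᵥ x)]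
  exact this.symm

theorem le_one_of_isRoot_charpoly_transpose_mul_self {Φ : Matrix n n ℝ}
    (hΦ : Φ ∈ contractions n) {μ : ℝ} (hμ : (Φᵀ * Φ).charpoly.IsRoot μ) : μ ≤ 1 := by
  rw [← charpoly_toLin', ← End.hasEigenvalue_iff_isRoot_charpoly] at hμ
  obtain ⟨v, hv⟩ := hμ.exists_hasEigenvector
  have hpos : 0 < v ⬝ᵥ v := by simpa using dotProduct_star_self_pos_iff.mpr hv.2
  have hq := hΦ v
  rw [← dotProduct_transpose_mul_self_mulVec, ← toLin'_apply, hv.apply_eq_smul, dotProduct_smul,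
    smul_eq_mul] at hq
  exact le_of_mul_le_mul_right (by linarith) hpos

end Matrix

noncomputable def transitionMatrix {n : Type*} [Fintype n] [DecidableEq n] {p : ℕ}
    (L : Fin p → Matrix n n ℝ) (Δ : Fin p → ℝ) : Matrix n n ℝ :=
  ((List.ofFn fun j ↦ NormedSpace.exp (-(Δ j) • L j)).reverse).prod

section transitionMatrix

variable {n : Type*} [Fintype n] [DecidableEq n] {p : ℕ} {L : Fin p → Matrix n n ℝ}
  {Δ : Fin p → ℝ}

theorem transitionMatrix_mem_contractions (hL : ∀ j, (L j).PosSemidef) (hΔ : ∀ j, 0 ≤ Δ j) :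
    transitionMatrix L Δ ∈ contractions n :=
  Submonoid.list_prod_mem _ <| List.forall_mem_reverse_ofFn_iff.mpr fun j ↦
    (hL j).exp_neg_smul_mem_contractions (hΔ j)

theorem transpose_mul_self_transitionMatrix_mulVec_eq_self_iff (hL : ∀ j, (L j).PosSemidef)
    (hΔ : ∀ j, 0 < Δ j) (x : n → ℝ) :
    ((transitionMatrix L Δ)ᵀ * transitionMatrix L Δ) *ᵥ x = x ↔ ∀ j, L j *ᵥ x = 0 := by
  rw [transpose_mul_self_mulVec_eq_self_iff
      (transitionMatrix_mem_contractions hL fun j ↦ (hΔ j).le),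
    transitionMatrix, list_prod_mulVec_dotProduct_self_eq_iff]
  · rw [List.forall_mem_reverse_ofFn_iff]
    exact forall_congr' fun j ↦ (hL j).isHermitian.exp_smul_mulVec_eq_self_iff_s8
      (neg_ne_zero.mpr (hΔ j).ne') x
  · exact List.forall_mem_reverse_ofFn_iff.mpr fun j ↦
      (hL j).exp_neg_smul_mem_contractions (hΔ j).le
  · exact List.forall_mem_reverse_ofFn_iff.mpr fun j y ↦
      ((hL j).exp_neg_smul_mulVec_dotProduct_self_eq_iff (hΔ j).le y).mp

end transitionMatrix

/-- Let `L 0, …, L (p-1)` be symmetric positive semidefinite, `Δ j > 0`,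
`Φ = exp(-Δ_{p-1} L_{p-1}) ⋯ exp(-Δ_0 L_0)`, and `m = dim (⋂ⱼ ker Lⱼ)`.  If
`μ 0 ≥ μ 1 ≥ ⋯ ≥ μ (N-1)` lists the eigenvalues of `Φᵀ Φ` in decreasing order with
multiplicity (encoded by the characteristic polynomial factorization), then the first
`m` of them equal `1` and the `(m+1)`-st is strictly less than `1`. -/
theorem eigenvalues_of_transition_product
    (N p m : ℕ)
    (L : Fin p → Matrix (Fin N) (Fin N) ℝ)
    (hL : ∀ j, (L j).PosSemidef)
    (Δ : Fin p → ℝ) (hΔ : ∀ j, 0 < Δ j)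
    (Φ : Matrix (Fin N) (Fin N) ℝ)
    (hΦ : Φ = ((List.ofFn fun j : Fin p => NormedSpace.exp (-(Δ j) • L j)).reverse).prod)
    (hm : Module.finrank ℝ ↥(⨅ j : Fin p, LinearMap.ker (L j).mulVecLin) = m)
    (μ : Fin N → ℝ)
    (hmono : Antitone μ)
    (hμ : (Φᵀ * Φ).charpoly = ∏ i : Fin N, (Polynomial.X - Polynomial.C (μ i))) :
    (∀ i : Fin N, (i : ℕ) < m → μ i = 1) ∧ (∀ i : Fin N, (i : ℕ) = m → μ i < 1) := by
  change Φ = transitionMatrix L Δ at hΦ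
  subst hΦ
  have hker : End.eigenspace (toLin' ((transitionMatrix L Δ)ᵀ * transitionMatrix L Δ)) 1 =
      ⨅ j, LinearMap.ker (L j).mulVecLin := by
    ext x
    simp [transpose_mul_self_transitionMatrix_mulVec_eq_self_iff hL hΔ]
  have hcount : #{i | μ i = 1} = m := by
    rw [← rootMultiplicity_prod_X_sub_C, ← hμ,
      ← (isHermitian_transpose_mul_self (transitionMatrix L Δ)).finrank_eigenspace_toLin', hker, hm]
  have hle : ∀ i, μ i ≤ 1 := fun i ↦
    le_one_of_isRoot_charpoly_transpose_mul_self
      (transitionMatrix_mem_contractions hL fun j ↦ (hΔ j).le)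
      (by rw [hμ, IsRoot, eval_prod, prod_eq_zero_iff]; exact ⟨i, mem_univ i, by simp⟩)
  have hone := hmono.apply_eq_iff_lt_card hle
  rw [hcount] at hone
  exact ⟨fun i hi ↦ (hone i).mpr hi,
    fun i hi ↦ (hle i).lt_of_ne fun h ↦ ((hone i).mp h).ne' hi.symm⟩
end

section
/- Let L : [0,∞) → ℝ^{N×N} be piecewise constant with all values symmetric positive semidefinite, let t_{k_0} = 0 < t_{k_1} < t_{k_2} < ⋯ be a subsequence of switching times, let N ⊆ ℝ^N be a subspace of dimension m equal to the null space of the integral-network Laplacian over each span [t_{k_l}, t_{k_{l+1}}), and suppose q ∈ (0,1) is such that the (m+1)-th largest eigenvalue of Φ_l^⊤Φ_l is at most q for every l, where Φ_l is the state transition matrix of ẋ = −L(t)x over [t_{k_l}, t_{k_{l+1}}]. If ω solves ω̇(t) = −L(t)ω(t) with ω(0) orthogonal to N, then ‖ω(t)‖ ≤ q^{l/2} ‖ω(0)‖ for all t ∈ [t_{k_l}, t_{k_{l+1}}) and all l ≥ 0; in particular ‖ω(t)‖ → 0 as t → ∞. -/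
/-!
Every Laplacian active on a span is positive semidefinite, so the kernel `N` of the integral
Laplacian is their common kernel and each factor `exp (-Δ L)` of `Φₗ` fixes `N`, as does its
transpose. Hence `N` lies in the eigenvalue-`1` eigenspace of `Φₗᵀ Φₗ`. Since at most `m = dim N`
eigenvalues exceed `q < 1`, `N` is exactly the span of the eigenvectors with eigenvalue `> q`, so
`‖Φₗ x‖² ≤ q ‖x‖²` for `x ⟂ N`, and `Φₗ x ⟂ N` again. Within a span `‖ω‖` cannot grow, because
`exp (-Δ L)` is a contraction for `L ⪰ 0`; induction over the spans gives the bound.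
-/

open Matrix Filter

open Polynomial Finset

theorem Monotone.exists_mem_Ico_of_tendsto_atTop {α : Type*} [LinearOrder α] [NoMaxOrder α]
    {f : ℕ → α} (hf : Monotone f) (hlim : Tendsto f atTop atTop) {a : ℕ} {s : α}
    (hs : f a ≤ s) : ∃ i, a ≤ i ∧ s ∈ Set.Ico (f i) (f (i + 1)) := by
  have hunb : ¬BddAbove (f '' Set.Ici a) := by
    rintro ⟨b, hb⟩
    obtain ⟨i, hbi, hai⟩ := ((hlim.eventually_gt_atTop b).and (eventually_ge_atTop a)).exists
    exact hbi.not_ge (hb ⟨i, hai, rfl⟩)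
  have hmem : s ∈ ⋃ i ∈ Set.Ici a, Set.Ico (f i) (f (Order.succ i)) := by
    rw [biUnion_Ici_Ico_map_succ (fun i hi => hf hi) hunb]
    exact hs
  simpa only [Set.mem_iUnion, Set.mem_Ici, Order.succ_eq_add_one, exists_prop] using hmem

theorem tendsto_nhds_zero_of_forall_mem_Ico_le {f : ℝ → ℝ} {x b : ℕ → ℝ} (hx : Monotone x)
    (hxlim : Tendsto x atTop atTop) (hf : ∀ s, 0 ≤ f s) (hb : Tendsto b atTop (nhds 0))
    (hfb : ∀ l, ∀ s ∈ Set.Ico (x l) (x (l + 1)), f s ≤ b l) : Tendsto f atTop (nhds 0) := by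
  refine tendsto_order.2 ⟨fun a ha => Eventually.of_forall fun s => ha.trans_le (hf s),
    fun ε hε => ?_⟩
  obtain ⟨l₀, hl₀⟩ := eventually_atTop.1 (hb.eventually (gt_mem_nhds hε))
  filter_upwards [eventually_ge_atTop (x l₀)] with s hs
  obtain ⟨l, hl, hsl⟩ := hx.exists_mem_Ico_of_tendsto_atTop hxlim hs
  exact (hfb l s hsl).trans_lt (hl₀ l hl)

theorem Polynomial.card_filter_eq_of_prod_X_sub_C_eq {ι R : Type*} [Fintype ι] [CommRing R]
    [IsDomain R] {a b : ι → R} (h : ∏ i, (X - C (a i)) = ∏ i, (X - C (b i)))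
    (p : R → Prop) [DecidablePred p] : #{i | p (a i)} = #{i | p (b i)} := by
  have hroots (c : ι → R) : (∏ i, (X - C (c i))).roots = univ.val.map c := by
    rw [prod_eq_multiset_prod, ← roots_multiset_prod_X_sub_C (univ.val.map c), Multiset.map_map]
    rfl
  have hcount (c : ι → R) : #{i | p (c i)} = (univ.val.map c).countP p := by
    rw [Multiset.countP_map, card, filter_val]
  rw [hcount, hcount, ← hroots, ← hroots, h]

theorem Fin.card_filter_lt_le_of_antitone {n m : ℕ} {μ : Fin n → ℝ} (hμ : Antitone μ) {q : ℝ}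
    (hμq : ∀ i : Fin n, (i : ℕ) = m → μ i ≤ q) : #{i | q < μ i} ≤ m := by
  calc #{i | q < μ i} ≤ #{i : Fin n | i < m} := card_le_card fun i hi => by
        simp only [mem_filter, mem_univ, true_and] at hi ⊢
        by_contra! him
        exact hi.not_ge ((hμ (Fin.le_def.2 him)).trans (hμq ⟨m, by omega⟩ rfl))
    _ = min n m := Fin.card_filter_val_lt
    _ ≤ m := min_le_right n m

namespace Matrix

variable {ι : Type*} [Fintype ι]

theorem mulVec_dotProduct_mulVec_self (Φ : Matrix ι ι ℝ) (x : ι → ℝ) :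
    (Φ *ᵥ x) ⬝ᵥ (Φ *ᵥ x) = x ⬝ᵥ ((Φᵀ * Φ) *ᵥ x) := by
  rw [← mulVec_mulVec, dotProduct_mulVec x, vecMul_transpose]

theorem mulVec_dotProduct_eq_zero_of_transpose_mulVec_eq_self {Φ : Matrix ι ι ℝ}
    {N : Submodule ℝ (ι → ℝ)} (hΦ : ∀ v ∈ N, Φᵀ *ᵥ v = v) {x : ι → ℝ}
    (hx : ∀ v ∈ N, x ⬝ᵥ v = 0) : ∀ v ∈ N, (Φ *ᵥ x) ⬝ᵥ v = 0 := fun v hv => by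
  rw [← vecMul_transpose, ← dotProduct_mulVec, hΦ v hv, hx v hv]

theorem dotProduct_mulVec_eq_mul_of_mulVec_eq_smul {A : Matrix ι ι ℝ} (hA : Aᵀ = A)
    {u : ι → ℝ} {d : ℝ} (hu : A *ᵥ u = d • u) (x : ι → ℝ) :
    u ⬝ᵥ (A *ᵥ x) = d * (u ⬝ᵥ x) := by
  rw [dotProduct_mulVec, ← mulVec_transpose, hA, hu, smul_dotProduct, smul_eq_mul]

theorem sum_dotProduct_smul_orthonormalBasis (b : OrthonormalBasis ι ℝ (EuclideanSpace ℝ ι))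
    (x : ι → ℝ) : ∑ i, (b i ⬝ᵥ x) • ⇑(b i) = x := by
  simpa [EuclideanSpace.inner_eq_star_dotProduct, dotProduct_comm x] using
    congrArg WithLp.ofLp (b.sum_repr' (WithLp.toLp 2 x))

theorem dotProduct_mulVec_eq_sum_of_orthonormalBasis {A : Matrix ι ι ℝ} (hA : Aᵀ = A)
    (b : OrthonormalBasis ι ℝ (EuclideanSpace ℝ ι)) {d : ι → ℝ}
    (hb : ∀ i, A *ᵥ b i = d i • b i) (x : ι → ℝ) :
    x ⬝ᵥ (A *ᵥ x) = ∑ i, d i * (b i ⬝ᵥ x) ^ 2 := by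
  have hparseval := b.sum_inner_mul_inner (WithLp.toLp 2 x) (WithLp.toLp 2 (A *ᵥ x))
  simp only [EuclideanSpace.inner_eq_star_dotProduct, star_trivial] at hparseval
  rw [dotProduct_comm, ← hparseval]
  refine sum_congr rfl fun i _ => ?_
  rw [dotProduct_comm (A *ᵥ x), dotProduct_mulVec_eq_mul_of_mulVec_eq_smul hA (hb i)]
  ring

theorem dotProduct_self_eq_sum_of_orthonormalBasis
    (b : OrthonormalBasis ι ℝ (EuclideanSpace ℝ ι)) (x : ι → ℝ) :
    x ⬝ᵥ x = ∑ i, (b i ⬝ᵥ x) ^ 2 := by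
  classical
  simpa using dotProduct_mulVec_eq_sum_of_orthonormalBasis (A := 1) (d := 1) (by simp) b
    (by simp) x

theorem dotProduct_mulVec_le_of_orthonormalBasis {A : Matrix ι ι ℝ} (hA : Aᵀ = A)
    (b : OrthonormalBasis ι ℝ (EuclideanSpace ℝ ι)) {d : ι → ℝ}
    (hb : ∀ i, A *ᵥ b i = d i • b i) {q : ℝ} {x : ι → ℝ} (hx : ∀ i, q < d i → b i ⬝ᵥ x = 0) :
    x ⬝ᵥ (A *ᵥ x) ≤ q * (x ⬝ᵥ x) := by
  rw [dotProduct_mulVec_eq_sum_of_orthonormalBasis hA b hb,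
    dotProduct_self_eq_sum_of_orthonormalBasis b, mul_sum]
  refine sum_le_sum fun i _ => ?_
  rcases le_or_gt (d i) q with hdq | hqd
  · exact mul_le_mul_of_nonneg_right hdq (sq_nonneg _)
  · simp [hx i hqd]

theorem PosSemidef.mulVec_eq_zero_of_sum_smul_mulVec_eq_zero {κ : Type*} {s : Finset κ}
    {w : κ → ℝ} {P : κ → Matrix ι ι ℝ} (hw : ∀ i ∈ s, 0 < w i) (hP : ∀ i ∈ s, (P i).PosSemidef)
    {v : ι → ℝ} (hv : (∑ i ∈ s, w i • P i) *ᵥ v = 0) {i : κ} (hi : i ∈ s) : P i *ᵥ v = 0 := by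
  have hterm : ∀ j ∈ s, 0 ≤ w j * (v ⬝ᵥ (P j *ᵥ v)) := fun j hj =>
    mul_nonneg (hw j hj).le (by simpa using (hP j hj).dotProduct_mulVec_nonneg v)
  have hsum : ∑ j ∈ s, w j * (v ⬝ᵥ (P j *ᵥ v)) = 0 := by
    simpa [sum_mulVec, dotProduct_sum, smul_mulVec, dotProduct_smul] using congrArg (v ⬝ᵥ ·) hv
  have hzero := (sum_eq_zero_iff_of_nonneg hterm).1 hsum i hi
  rw [← (hP i hi).dotProduct_mulVec_zero_iff, star_trivial]
  exact (mul_eq_zero.1 hzero).resolve_left (hw i hi).ne'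

variable [DecidableEq ι]

theorem list_prod_mulVec_eq_self_s13 {Ms : List (Matrix ι ι ℝ)} {v : ι → ℝ}
    (h : ∀ M ∈ Ms, M *ᵥ v = v) : Ms.prod *ᵥ v = v := by
  induction Ms with
  | nil => simp
  | cons M Ms ih =>
    rw [List.prod_cons, ← mulVec_mulVec, ih fun M' hM' => h M' (List.mem_cons_of_mem _ hM'),
      h M List.mem_cons_self]

theorem list_prod_transpose_mulVec_eq_self {Ms : List (Matrix ι ι ℝ)} {v : ι → ℝ}
    (h : ∀ M ∈ Ms, Mᵀ *ᵥ v = v) : Ms.prodᵀ *ᵥ v = v := by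
  rw [transpose_list_prod]
  refine list_prod_mulVec_eq_self_s13 fun N hN => ?_
  obtain ⟨M, hM, rfl⟩ := List.mem_map.1 (List.mem_reverse.1 hN)
  exact h M hM

theorem exp_mulVec_of_mulVec_eq_smul {S : Matrix ι ι ℝ} {u : ι → ℝ} {μ : ℝ}
    (h : S *ᵥ u = μ • u) : NormedSpace.exp S *ᵥ u = Real.exp μ • u := by
  let := Matrix.linftyOpNormedRing (n := ι) (α := ℝ)
  let := Matrix.linftyOpNormedAlgebra (n := ι) (R := ℝ) (α := ℝ)
  have hpow (j : ℕ) : (S ^ j) *ᵥ u = μ ^ j • u := by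
    induction j with
    | zero => simp
    | succ j ih => rw [pow_succ', ← mulVec_mulVec, ih, mulVec_smul, h, smul_smul, pow_succ]
  have hS := (NormedSpace.exp_series_hasSum_exp' (𝕂 := ℝ) S).map
    (mulVec.addMonoidHomLeft u) (continuous_id.matrix_mulVec continuous_const)
  have hμ := (NormedSpace.exp_series_hasSum_exp' (𝕂 := ℝ) μ).smul_const u
  rw [← Real.exp_eq_exp_ℝ] at hμ
  refine hS.unique ?_
  convert hμ using 2 with j
  simp [mulVec.addMonoidHomLeft, smul_mulVec, hpow, smul_smul]

theorem exp_mulVec_eq_self_of_mulVec_eq_zero {S : Matrix ι ι ℝ} {v : ι → ℝ}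
    (h : S *ᵥ v = 0) : NormedSpace.exp S *ᵥ v = v := by
  simpa using exp_mulVec_of_mulVec_eq_smul (μ := 0) (by simpa using h)

theorem PosSemidef.exp_neg_smul_mulVec_dotProduct_self_le {L : Matrix ι ι ℝ}
    (hL : L.PosSemidef) {c : ℝ} (hc : 0 ≤ c) (x : ι → ℝ) :
    (NormedSpace.exp (-c • L) *ᵥ x) ⬝ᵥ (NormedSpace.exp (-c • L) *ᵥ x) ≤ x ⬝ᵥ x := by
  set E := NormedSpace.exp (-c • L)
  have hLT : Lᵀ = L := hL.1
  have hET : Eᵀ = E := by rw [← exp_transpose, transpose_smul, hLT]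
  set b := hL.1.eigenvectorBasis
  set d : ι → ℝ := fun i => Real.exp (-c * hL.1.eigenvalues i)
  have hEb (i : ι) : E *ᵥ b i = d i • b i :=
    exp_mulVec_of_mulVec_eq_smul (by rw [smul_mulVec, hL.1.mulVec_eigenvectorBasis, smul_smul])
  have hEEb (i : ι) : (Eᵀ * E) *ᵥ b i = (d i * d i) • b i := by
    rw [hET, ← mulVec_mulVec, hEb, mulVec_smul, hEb, smul_smul]
  have hd (i : ι) : d i ≤ 1 :=
    Real.exp_le_one_iff.2 (by nlinarith [hL.eigenvalues_nonneg i])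
  rw [mulVec_dotProduct_mulVec_self, ← one_mul (x ⬝ᵥ x)]
  exact dotProduct_mulVec_le_of_orthonormalBasis (by rw [transpose_mul, transpose_transpose])
    b hEEb fun i hi => absurd hi (not_lt.2 (mul_le_one₀ (hd i) (Real.exp_pos _).le (hd i)))

theorem IsHermitian.dotProduct_mulVec_le_of_forall_dotProduct_eq_zero {A : Matrix ι ι ℝ}
    (hA : A.IsHermitian) {q : ℝ} (hq : q < 1) {N : Submodule ℝ (ι → ℝ)}
    (hcard : #{i | q < hA.eigenvalues i} ≤ Module.finrank ℝ N) (hN : ∀ v ∈ N, A *ᵥ v = v)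
    {x : ι → ℝ} (hx : ∀ v ∈ N, x ⬝ᵥ v = 0) : x ⬝ᵥ (A *ᵥ x) ≤ q * (x ⬝ᵥ x) := by
  have hAT : Aᵀ = A := hA
  set b := hA.eigenvectorBasis
  set S : Finset ι := {i | q < hA.eigenvalues i}
  set W := Submodule.span ℝ (S.image fun i => ⇑(b i) : Set (ι → ℝ))
  have hNW : N ≤ W := by
    intro v hv
    rw [← sum_dotProduct_smul_orthonormalBasis b v]
    refine Submodule.sum_mem _ fun i _ => ?_
    by_cases hi : i ∈ S
    · exact Submodule.smul_mem _ _ (Submodule.subset_span (mem_coe.2 (mem_image_of_mem _ hi)))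
    have hlt : hA.eigenvalues i < 1 := by
      simp only [S, mem_filter, mem_univ, true_and, not_lt] at hi
      linarith
    have h := dotProduct_mulVec_eq_mul_of_mulVec_eq_smul hAT (hA.mulVec_eigenvectorBasis i) v
    rw [hN v hv] at h
    have hcoef : b i ⬝ᵥ v = 0 :=
      (mul_eq_zero.1 (show (1 - hA.eigenvalues i) * (b i ⬝ᵥ v) = 0 by linarith)).resolve_left
        (by linarith)
    rw [hcoef, zero_smul]
    exact W.zero_mem
  have hNW : N = W := Submodule.eq_of_le_of_finrank_le hNW
    ((finrank_span_finset_le_card _).trans (card_image_le.trans hcard))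
  refine dotProduct_mulVec_le_of_orthonormalBasis hAT b hA.mulVec_eigenvectorBasis fun i hi => ?_
  rw [dotProduct_comm]
  exact hx _ (hNW ▸ Submodule.subset_span (mem_coe.2 (mem_image_of_mem _ (by simpa [S] using hi))))

theorem mulVec_dotProduct_self_le_of_charpoly_eq {n : ℕ} {Φ : Matrix (Fin n) (Fin n) ℝ}
    {N : Submodule ℝ (Fin n → ℝ)} (hΦ : ∀ v ∈ N, Φ *ᵥ v = v) (hΦT : ∀ v ∈ N, Φᵀ *ᵥ v = v)
    {μ : Fin n → ℝ} (hμ : Antitone μ) (hchar : (Φᵀ * Φ).charpoly = ∏ i, (X - C (μ i)))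
    {q : ℝ} (hq : q < 1) (hμq : ∀ i : Fin n, (i : ℕ) = Module.finrank ℝ N → μ i ≤ q)
    {x : Fin n → ℝ} (hx : ∀ v ∈ N, x ⬝ᵥ v = 0) : (Φ *ᵥ x) ⬝ᵥ (Φ *ᵥ x) ≤ q * (x ⬝ᵥ x) := by
  have hA : (Φᵀ * Φ).IsHermitian := isHermitian_conjTranspose_mul_self Φ
  have hcard : #{i | q < hA.eigenvalues i} ≤ Module.finrank ℝ N := by
    have heig : ∏ i, (X - C (hA.eigenvalues i)) = (Φᵀ * Φ).charpoly := by
      simpa using hA.charpoly_eq.symm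
    rw [card_filter_eq_of_prod_X_sub_C_eq (heig.trans hchar)]
    exact Fin.card_filter_lt_le_of_antitone hμ hμq
  rw [mulVec_dotProduct_mulVec_self]
  exact hA.dotProduct_mulVec_le_of_forall_dotProduct_eq_zero hq hcard
    (fun v hv => by rw [← mulVec_mulVec, hΦ v hv, hΦT v hv]) hx

end Matrix

theorem eNorm_le_sqrt_mul_of_dotProduct_self_le {n : ℕ} {v w : Fin n → ℝ} {c : ℝ}
    (h : v ⬝ᵥ v ≤ c * (w ⬝ᵥ w)) : eNorm v ≤ √c * eNorm w := by
  have hsqrt (u : Fin n → ℝ) : eNorm u = √(u ⬝ᵥ u) := by simp [eNorm, dotProduct, sq]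
  rw [hsqrt, hsqrt, ← Real.sqrt_mul' _ (by simpa using dotProduct_star_self_nonneg w)]
  exact Real.sqrt_le_sqrt h

theorem tendsto_rpow_natCast_div_two_atTop_nhds_zero {q : ℝ} (hq₀ : 0 ≤ q) (hq₁ : q < 1) :
    Tendsto (fun l : ℕ => q ^ ((l : ℝ) / 2)) atTop (nhds 0) := by
  simp only [Real.rpow_div_two_eq_sqrt _ hq₀, Real.rpow_natCast]
  exact tendsto_pow_atTop_nhds_zero_of_lt_one (Real.sqrt_nonneg q)
    ((Real.sqrt_lt' one_pos).2 (by linarith))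

namespace SwitchedSystem

variable {ι : Type*} [Fintype ι]

noncomputable def integralLaplacian (t : ℕ → ℝ) (L : ℝ → Matrix ι ι ℝ) (a b : ℕ) :
    Matrix ι ι ℝ :=
  (t b - t a)⁻¹ • ∑ i ∈ range (b - a), (t (a + i + 1) - t (a + i)) • L (t (a + i))

variable {t : ℕ → ℝ} {L : ℝ → Matrix ι ι ℝ}

theorem mulVec_eq_zero_of_integralLaplacian_mulVec_eq_zero (ht : StrictMono t)
    (hL : ∀ j, (L (t j)).PosSemidef) {a b : ℕ} (hab : a < b) {v : ι → ℝ}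
    (hv : integralLaplacian t L a b *ᵥ v = 0) {i : ℕ} (hi : i < b - a) :
    L (t (a + i)) *ᵥ v = 0 := by
  rw [integralLaplacian, smul_mulVec,
    smul_eq_zero_iff_right (inv_ne_zero (sub_pos.2 (ht hab)).ne')] at hv
  exact PosSemidef.mulVec_eq_zero_of_sum_smul_mulVec_eq_zero
    (fun j _ => sub_pos.2 (ht (Nat.lt_succ_self _))) (fun j _ => hL _) hv (mem_range.2 hi)

variable [DecidableEq ι]

noncomputable def transitionMatrix (t : ℕ → ℝ) (L : ℝ → Matrix ι ι ℝ) (a b : ℕ) :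
    Matrix ι ι ℝ :=
  (List.ofFn fun i : Fin (b - a) =>
    NormedSpace.exp (-(t (a + i + 1) - t (a + i)) • L (t (a + i)))).reverse.prod

def IsSolution (t : ℕ → ℝ) (L : ℝ → Matrix ι ι ℝ) (ω : ℝ → ι → ℝ) : Prop :=
  ∀ j : ℕ, ∀ s ∈ Set.Icc (t j) (t (j + 1)),
    ω s = NormedSpace.exp (-(s - t j) • L (t j)) *ᵥ ω (t j)

@[simp]
theorem transitionMatrix_self (a : ℕ) : transitionMatrix t L a a = 1 := by
  simp [transitionMatrix]

theorem transitionMatrix_succ {a b : ℕ} (hab : a ≤ b) :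
    transitionMatrix t L a (b + 1) =
      NormedSpace.exp (-(t (b + 1) - t b) • L (t b)) * transitionMatrix t L a b := by
  rw [transitionMatrix, show b + 1 - a = b - a + 1 by omega, List.ofFn_succ',
    List.concat_eq_append, List.reverse_concat', List.prod_cons]
  simp only [Fin.val_last, Nat.add_sub_cancel' hab, Fin.val_castSucc]
  rfl

theorem transitionMatrix_mulVec_eq_self (ht : StrictMono t) (hL : ∀ j, (L (t j)).PosSemidef)
    {a b : ℕ} (hab : a < b) {v : ι → ℝ} (hv : integralLaplacian t L a b *ᵥ v = 0) :
    transitionMatrix t L a b *ᵥ v = v := by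
  refine list_prod_mulVec_eq_self_s13 fun M hM => ?_
  obtain ⟨i, rfl⟩ := List.mem_ofFn.1 (List.mem_reverse.1 hM)
  refine exp_mulVec_eq_self_of_mulVec_eq_zero ?_
  rw [smul_mulVec, mulVec_eq_zero_of_integralLaplacian_mulVec_eq_zero ht hL hab hv i.isLt,
    smul_zero]

theorem transitionMatrix_transpose_mulVec_eq_self (ht : StrictMono t)
    (hL : ∀ j, (L (t j)).PosSemidef) {a b : ℕ} (hab : a < b) {v : ι → ℝ}
    (hv : integralLaplacian t L a b *ᵥ v = 0) : (transitionMatrix t L a b)ᵀ *ᵥ v = v := by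
  refine list_prod_transpose_mulVec_eq_self fun M hM => ?_
  obtain ⟨i, rfl⟩ := List.mem_ofFn.1 (List.mem_reverse.1 hM)
  rw [← exp_transpose, transpose_smul, show (L (t (a + i)))ᵀ = L (t (a + i)) from (hL _).1]
  refine exp_mulVec_eq_self_of_mulVec_eq_zero ?_
  rw [smul_mulVec, mulVec_eq_zero_of_integralLaplacian_mulVec_eq_zero ht hL hab hv i.isLt,
    smul_zero]

namespace IsSolution

variable {ω : ℝ → ι → ℝ}

theorem apply_eq_transitionMatrix_mulVec (hω : IsSolution t L ω) (ht : Monotone t) {a b : ℕ}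
    (hab : a ≤ b) : ω (t b) = transitionMatrix t L a b *ᵥ ω (t a) := by
  induction b, hab using Nat.le_induction with
  | base => simp
  | succ b hab ih =>
    rw [transitionMatrix_succ hab, ← mulVec_mulVec, ← ih]
    exact hω b _ ⟨ht (Nat.le_succ b), le_rfl⟩

theorem dotProduct_self_le_of_mem_Icc (hω : IsSolution t L ω) (hL : ∀ j, (L (t j)).PosSemidef)
    {j : ℕ} {s : ℝ} (hs : s ∈ Set.Icc (t j) (t (j + 1))) : ω s ⬝ᵥ ω s ≤ ω (t j) ⬝ᵥ ω (t j) := by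
  rw [hω j s hs]
  exact (hL j).exp_neg_smul_mulVec_dotProduct_self_le (sub_nonneg.2 hs.1) _

theorem dotProduct_self_le_of_le (hω : IsSolution t L ω) (ht : Monotone t)
    (hlim : Tendsto t atTop atTop) (hL : ∀ j, (L (t j)).PosSemidef) {a : ℕ} {s : ℝ}
    (hs : t a ≤ s) : ω s ⬝ᵥ ω s ≤ ω (t a) ⬝ᵥ ω (t a) := by
  have hanti : Antitone fun j => ω (t j) ⬝ᵥ ω (t j) := antitone_nat_of_succ_le fun j =>
    hω.dotProduct_self_le_of_mem_Icc hL ⟨ht (Nat.le_succ j), le_rfl⟩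
  obtain ⟨j, haj, hsj⟩ := ht.exists_mem_Ico_of_tendsto_atTop hlim hs
  exact (hω.dotProduct_self_le_of_mem_Icc hL (Set.Ico_subset_Icc_self hsj)).trans (hanti haj)

theorem dotProduct_self_le_mul_and_dotProduct_eq_zero {n : ℕ} {t : ℕ → ℝ}
    {L : ℝ → Matrix (Fin n) (Fin n) ℝ} {ω : ℝ → Fin n → ℝ} (hω : IsSolution t L ω)
    (ht : StrictMono t) (hL : ∀ j, (L (t j)).PosSemidef) {a b : ℕ} (hab : a < b)
    {N : Submodule ℝ (Fin n → ℝ)} (hker : LinearMap.ker (integralLaplacian t L a b).mulVecLin = N)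
    {μ : Fin n → ℝ} (hμ : Antitone μ)
    (hchar : ((transitionMatrix t L a b)ᵀ * transitionMatrix t L a b).charpoly =
      ∏ i, (X - C (μ i)))
    {q : ℝ} (hq : q < 1) (hμq : ∀ i : Fin n, (i : ℕ) = Module.finrank ℝ N → μ i ≤ q)
    (hx : ∀ v ∈ N, ω (t a) ⬝ᵥ v = 0) :
    ω (t b) ⬝ᵥ ω (t b) ≤ q * (ω (t a) ⬝ᵥ ω (t a)) ∧ ∀ v ∈ N, ω (t b) ⬝ᵥ v = 0 := by
  have hNker {v : Fin n → ℝ} (hv : v ∈ N) : integralLaplacian t L a b *ᵥ v = 0 := by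
    rw [← hker] at hv
    exact hv
  have hfix (v) (hv : v ∈ N) := transitionMatrix_mulVec_eq_self ht hL hab (hNker hv)
  have hfixT (v) (hv : v ∈ N) := transitionMatrix_transpose_mulVec_eq_self ht hL hab (hNker hv)
  rw [hω.apply_eq_transitionMatrix_mulVec ht.monotone hab.le]
  exact ⟨mulVec_dotProduct_self_le_of_charpoly_eq hfix hfixT hμ hchar hq hμq hx,
    mulVec_dotProduct_eq_zero_of_transpose_mulVec_eq_self hfixT hx⟩

end IsSolution

end SwitchedSystem

open SwitchedSystem

theorem error_decay_geometric_general
    (n m : ℕ)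
    (t : ℕ → ℝ) (ht0 : t 0 = 0) (htmono : StrictMono t)
    (htlim : Tendsto t atTop atTop)
    (L : ℝ → Matrix (Fin n) (Fin n) ℝ)
    (hLpsd : ∀ s : ℝ, 0 ≤ s → (L s).PosSemidef)
    (k : ℕ → ℕ) (hk0 : k 0 = 0) (hkmono : StrictMono k)
    (q : ℝ) (hq : q ∈ Set.Ioo (0 : ℝ) 1)
    (Nsp : Submodule ℝ (Fin n → ℝ))
    (hNdim : Module.finrank ℝ ↥Nsp = m)
    (hker : ∀ l : ℕ,
      LinearMap.ker ((t (k (l + 1)) - t (k l))⁻¹ •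
        ∑ i ∈ Finset.range (k (l + 1) - k l),
          (t (k l + i + 1) - t (k l + i)) • L (t (k l + i))).mulVecLin = Nsp)
    (Φl : ℕ → Matrix (Fin n) (Fin n) ℝ)
    (hΦl : ∀ l : ℕ, Φl l = ((List.ofFn fun i : Fin (k (l + 1) - k l) =>
      NormedSpace.exp
        (-(t (k l + (i : ℕ) + 1) - t (k l + (i : ℕ))) • L (t (k l + (i : ℕ))))).reverse).prod)
    (hμ : ∀ l : ℕ, ∃ μ : Fin n → ℝ, Antitone μ ∧
      ((Φl l)ᵀ * Φl l).charpoly = (∏ i : Fin n, (Polynomial.X - Polynomial.C (μ i))) ∧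
      ∀ i : Fin n, (i : ℕ) = m → μ i ≤ q)
    (ω : ℝ → (Fin n → ℝ))
    (hω : ∀ k' : ℕ, ∀ s ∈ Set.Icc (t k') (t (k' + 1)),
      ω s = NormedSpace.exp (-(s - t k') • L (t k')) *ᵥ ω (t k'))
    (hωperp : ∀ v ∈ Nsp, ω 0 ⬝ᵥ v = 0) :
    (∀ l : ℕ, ∀ s ∈ Set.Ico (t (k l)) (t (k (l + 1))),
      eNorm (ω s) ≤ q ^ ((l : ℝ) / 2) * eNorm (ω 0)) ∧
    Tendsto (fun s => eNorm (ω s)) atTop (nhds 0) := by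
  have hL (j : ℕ) : (L (t j)).PosSemidef := hLpsd _ (ht0 ▸ htmono.monotone j.zero_le)
  have hsol : IsSolution t L ω := hω
  have hdecay (l : ℕ) : ω (t (k l)) ⬝ᵥ ω (t (k l)) ≤ q ^ l * (ω 0 ⬝ᵥ ω 0) ∧
      ∀ v ∈ Nsp, ω (t (k l)) ⬝ᵥ v = 0 := by
    induction l with
    | zero => simpa [hk0, ht0] using hωperp
    | succ l ih =>
      obtain ⟨μ, hμa, hchar, hμq⟩ := hμ l
      rw [hΦl l] at hchar
      obtain ⟨hle, hperp⟩ := hsol.dotProduct_self_le_mul_and_dotProduct_eq_zero htmono hL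
        (hkmono l.lt_succ_self) (hker l) hμa hchar hq.2 (hNdim ▸ hμq) ih.2
      refine ⟨hle.trans ?_, hperp⟩
      rw [pow_succ', mul_assoc]
      exact mul_le_mul_of_nonneg_left ih.1 hq.1.le
  have hbound (l : ℕ) (s : ℝ) (hs : s ∈ Set.Ico (t (k l)) (t (k (l + 1)))) :
      eNorm (ω s) ≤ q ^ ((l : ℝ) / 2) * eNorm (ω 0) := by
    have hsqrt : q ^ ((l : ℝ) / 2) = √(q ^ l) := by
      rw [Real.sqrt_eq_rpow, ← Real.rpow_natCast, ← Real.rpow_mul hq.1.le]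
      ring_nf
    rw [hsqrt]
    exact eNorm_le_sqrt_mul_of_dotProduct_self_le
      ((hsol.dotProduct_self_le_of_le htmono.monotone htlim hL hs.1).trans (hdecay l).1)
  refine ⟨hbound, tendsto_nhds_zero_of_forall_mem_Ico_le (htmono.comp hkmono).monotone
    (htlim.comp hkmono.tendsto_atTop) (fun s => Real.sqrt_nonneg _) ?_ hbound⟩
  simpa using (tendsto_rpow_natCast_div_two_atTop_nhds_zero hq.1.le hq.2).mul_const (eNorm (ω 0))

/-- Consider the switched system `ω̇ = -L(t) ω` with piecewise-constant
symmetric positive semidefinite generator, a subsequence of switching times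
`t (k 0) = 0 < t (k 1) < ⋯`, a subspace `Nsp` of dimension `m` equal to the null space of the
integral-network Laplacian over each span `[t (k l), t (k (l+1)))`, and `q ∈ (0,1)` such that
the `(m+1)`-st largest eigenvalue of `Φₗᵀ Φₗ` is at most `q` for every `l`. If `ω` solves the
system with `ω(0)` orthogonal to `Nsp`, then `‖ω(s)‖ ≤ q^{l/2} ‖ω(0)‖` for all
`s ∈ [t (k l), t (k (l+1)))` and all `l`; in particular `‖ω(s)‖ → 0` as `s → ∞`. -/
theorem error_decay_geometric
    (n m : ℕ)
    (t : ℕ → ℝ) (ht0 : t 0 = 0) (htmono : StrictMono t)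
    (htlim : Tendsto t atTop atTop)
    (L : ℝ → Matrix (Fin n) (Fin n) ℝ)
    (hLpsd : ∀ s : ℝ, 0 ≤ s → (L s).PosSemidef)
    (hLpc : ∀ k : ℕ, ∀ s ∈ Set.Ico (t k) (t (k + 1)), L s = L (t k))
    (k : ℕ → ℕ) (hk0 : k 0 = 0) (hkmono : StrictMono k)
    (q : ℝ) (hq : q ∈ Set.Ioo (0 : ℝ) 1)
    (Nsp : Submodule ℝ (Fin n → ℝ))
    (hNdim : Module.finrank ℝ ↥Nsp = m)
    (hker : ∀ l : ℕ,
      LinearMap.ker ((t (k (l + 1)) - t (k l))⁻¹ •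
        ∑ i ∈ Finset.range (k (l + 1) - k l),
          (t (k l + i + 1) - t (k l + i)) • L (t (k l + i))).mulVecLin = Nsp)
    (Φl : ℕ → Matrix (Fin n) (Fin n) ℝ)
    (hΦl : ∀ l : ℕ, Φl l = ((List.ofFn fun i : Fin (k (l + 1) - k l) =>
      NormedSpace.exp
        (-(t (k l + (i : ℕ) + 1) - t (k l + (i : ℕ))) • L (t (k l + (i : ℕ))))).reverse).prod)
    (hμ : ∀ l : ℕ, ∃ μ : Fin n → ℝ, Antitone μ ∧
      ((Φl l)ᵀ * Φl l).charpoly = (∏ i : Fin n, (Polynomial.X - Polynomial.C (μ i))) ∧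
      ∀ i : Fin n, (i : ℕ) = m → μ i ≤ q)
    (ω : ℝ → (Fin n → ℝ))
    (hω : ∀ k' : ℕ, ∀ s ∈ Set.Icc (t k') (t (k' + 1)),
      ω s = NormedSpace.exp (-(s - t k') • L (t k')) *ᵥ ω (t k'))
    (hωperp : ∀ v ∈ Nsp, ω 0 ⬝ᵥ v = 0) :
    (∀ l : ℕ, ∀ s ∈ Set.Ico (t (k l)) (t (k (l + 1))),
      eNorm (ω s) ≤ q ^ ((l : ℝ) / 2) * eNorm (ω 0)) ∧
    Tendsto (fun s => eNorm (ω s)) atTop (nhds 0) :=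
  error_decay_geometric_general n m t ht0 htmono htlim L hLpsd k hk0 hkmono q hq Nsp hNdim hker Φl
    hΦl hμ ω hω hωperp
end
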